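/- arXiv:2207.02829 — 5 statements merged into one kernel-verified Lean document; each statement's English description precedes it below -/
import Mathlib

section
/- Let g : ℝ^{d1} × ℝ^{d2} → ℝ be such that for every x ∈ ℝ^{d1} the function y ↦ g(x, y) is differentiable and μ_g-strongly convex (with μ_g > 0) and attains its minimum at a point y*(x) ∈ ℝ^{d2} (unique by strong convexity), and suppose the partial-gradient map (x, y) ↦ ∇_y g(x, y) is ℓ_{g,1}-Lipschitz on ℝ^{d1} × ℝ^{d2}. Then for all x, x' ∈ ℝ^{d1} one has ‖y*(x) − y*(x')‖ ≤ (ℓ_{g,1}/μ_g)·‖x − x'‖; that is, the inner-minimizer map x ↦ y*(x) is Lipschitz with constant equal to the condition number κ_g := ℓ_{g,1}/μ_g. -/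
/-! Strong convexity yields the error bound `μ ‖y - y*(x)‖ ≤ ‖∇_y g(x, y)‖` (add the
strong first-order inequalities at `y` and at the minimizer `y*(x)`, where the gradient vanishes).
At `y = y*(x')` the gradient of `g(x', ·)` vanishes, so the right-hand side is
`‖∇_y g(x, y) - ∇_y g(x', y)‖ ≤ ℓ ‖x - x'‖`. -/

open InnerProductSpace

lemma ConvexOn.add_le_of_hasFDerivAt {E : Type*} [NormedAddCommGroup E] [NormedSpace ℝ E]
    {f : E → ℝ} {f' : E →L[ℝ] ℝ} {s : Set E} {y z : E} (hf : ConvexOn ℝ s f)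
    (hy : y ∈ s) (hz : z ∈ s) (hfy : HasFDerivAt f f' y) :
    f y + f' (z - y) ≤ f z := by
  set ℓ : ℝ →ᵃ[ℝ] E := AffineMap.lineMap y z
  have hφ : HasDerivAt (f ∘ ℓ) (f' (z - y)) 0 :=
    HasFDerivAt.comp_hasDerivAt 0 (by simpa [ℓ] using hfy) AffineMap.hasDerivAt_lineMap
  have hslope := (hf.comp_affineMap ℓ).le_slope_of_hasDerivAt (by simpa [ℓ]) (by simpa [ℓ])
    zero_lt_one hφ
  simp only [slope_def_field, Function.comp_apply, ℓ, AffineMap.lineMap_apply_zero,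
    AffineMap.lineMap_apply_one, sub_zero, div_one] at hslope
  linarith

section InnerProductSpace

variable {E : Type*} [NormedAddCommGroup E] [InnerProductSpace ℝ E] [CompleteSpace E]
  {f : E → ℝ} {s : Set E} {m : ℝ}

lemma IsLocalMin.hasGradientAt_eq_zero {f' a : E} (h : IsLocalMin f a)
    (hf : HasGradientAt f f' a) : f' = 0 := by
  simpa using h.hasFDerivAt_eq_zero hf.hasFDerivAt

lemma StrongConvexOn.add_le_of_hasGradientAt {f' y z : E} (hf : StrongConvexOn s m f)
    (hy : y ∈ s) (hz : z ∈ s) (hfy : HasGradientAt f f' y) :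
    f y + inner ℝ f' (z - y) + m / 2 * ‖z - y‖ ^ 2 ≤ f z := by
  have hh : HasFDerivAt (fun x ↦ f x - m / 2 * ‖x‖ ^ 2)
      (toDual ℝ E f' - (m / 2) • (2 • innerSL ℝ y)) y :=
    hfy.hasFDerivAt.sub ((hasFDerivAt_id y).norm_sq.const_mul (m / 2))
  have hconv := (strongConvexOn_iff_convex.1 hf).add_le_of_hasFDerivAt hy hz hh
  have hnorm : ‖z - y‖ ^ 2 = ‖z‖ ^ 2 - 2 * inner ℝ y (z - y) - ‖y‖ ^ 2 := by
    rw [norm_sub_sq_real, inner_sub_right, real_inner_self_eq_norm_sq, real_inner_comm]; ring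
  simp only [sub_apply, toDual_apply_apply, smul_apply,
    coe_innerSL_apply, nsmul_eq_mul, Nat.cast_ofNat, smul_eq_mul] at hconv
  rw [hnorm]
  linarith

lemma StrongConvexOn.mul_norm_sub_sq_le_inner_sub {a b fa fb : E} (hf : StrongConvexOn s m f)
    (ha : a ∈ s) (hb : b ∈ s) (hfa : HasGradientAt f fa a) (hfb : HasGradientAt f fb b) :
    m * ‖a - b‖ ^ 2 ≤ inner ℝ (fa - fb) (a - b) := by
  have hab := hf.add_le_of_hasGradientAt ha hb hfa
  have hba := hf.add_le_of_hasGradientAt hb ha hfb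
  rw [norm_sub_rev b a, ← neg_sub a b, inner_neg_right] at hab
  rw [inner_sub_left]
  linarith

lemma StrongConvexOn.mul_norm_sub_le_norm_of_hasGradientAt {a b v : E} (hf : StrongConvexOn s m f)
    (ha : a ∈ s) (hb : b ∈ s) (hfa : HasGradientAt f 0 a) (hfb : HasGradientAt f v b) :
    m * ‖b - a‖ ≤ ‖v‖ := by
  rcases (norm_nonneg (b - a)).eq_or_lt with h0 | hpos
  · rw [← h0, mul_zero]; exact norm_nonneg v
  · refine le_of_mul_le_mul_right ?_ hpos
    calc m * ‖b - a‖ * ‖b - a‖ = m * ‖b - a‖ ^ 2 := by ring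
      _ ≤ inner ℝ (v - 0) (b - a) := hf.mul_norm_sub_sq_le_inner_sub hb ha hfb hfa
      _ ≤ ‖v‖ * ‖b - a‖ := by simpa using real_inner_le_norm v (b - a)

end InnerProductSpace

/-- Lipschitz continuity of the inner-minimizer map: if `g(x, ·)` is `μg`-strongly
convex with minimizer `ystar x` and `(x, y) ↦ ∇_y g(x, y)` is `ℓg1`-Lipschitz for the
Euclidean norm on the product, then `x ↦ ystar x` is `ℓg1/μg`-Lipschitz. -/
theorem inner_minimizer_lipschitz
    (d1 d2 : ℕ)
    (g : EuclideanSpace ℝ (Fin d1) → EuclideanSpace ℝ (Fin d2) → ℝ)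
    (μg ℓg1 : ℝ) (hμg : 0 < μg)
    (hdiff : ∀ x, Differentiable ℝ (g x))
    (hsc : ∀ x, ConvexOn ℝ Set.univ (fun y => g x y - μg / 2 * ‖y‖ ^ 2))
    (ystar : EuclideanSpace ℝ (Fin d1) → EuclideanSpace ℝ (Fin d2))
    (hmin : ∀ x y, g x (ystar x) ≤ g x y)
    (hlip : ∀ x x' y y', ‖gradient (g x) y - gradient (g x') y'‖
      ≤ ℓg1 * Real.sqrt (‖x - x'‖ ^ 2 + ‖y - y'‖ ^ 2)) :
    ∀ x x', ‖ystar x - ystar x'‖ ≤ (ℓg1 / μg) * ‖x - x'‖ := by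
  have hgrad0 : ∀ x, gradient (g x) (ystar x) = 0 := fun x ↦
    IsLocalMin.hasGradientAt_eq_zero (.of_forall (hmin x)) (hdiff x _).hasGradientAt
  intro x x'
  have hbound : μg * ‖ystar x' - ystar x‖ ≤ ‖gradient (g x) (ystar x')‖ :=
    (strongConvexOn_iff_convex.2 (hsc x)).mul_norm_sub_le_norm_of_hasGradientAt trivial trivial
      (hgrad0 x ▸ (hdiff x _).hasGradientAt) (hdiff x _).hasGradientAt
  have hgrad_lip : ‖gradient (g x) (ystar x')‖ ≤ ℓg1 * ‖x - x'‖ := by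
    simpa [hgrad0 x'] using hlip x x' (ystar x') (ystar x')
  rw [div_mul_eq_mul_div, le_div_iff₀ hμg, norm_sub_rev]
  linarith
end

section
/- Let T ≥ 1, let ρ_1 ≥ ρ_2 ≥ … ≥ ρ_T > 0 with ρ_1 < 1/√2, and let L_y > 0. For t = 1,…,T let x_t, x*_t ∈ ℝ^{d1}, let y*_t : ℝ^{d1} → ℝ^{d2} be L_y-Lipschitz, and let y_1,…,y_{T+1} ∈ ℝ^{d2} satisfy the contraction ‖y_{t+1} − y*_t(x_t)‖ ≤ ρ_t·‖y_t − y*_t(x_t)‖ for every t ∈ {1,…,T}. Then Σ_{t=1}^T ‖y_{t+1} − y*_t(x_t)‖² ≤ (1/(1 − 2ρ_1²))·( ρ_1²·‖y_1 − y*_1(x_1)‖² + 12·L_y²·Σ_{t=1}^T ρ_t²·‖x_t − x*_t‖² + 6·Σ_{t=2}^T ρ_t²·‖y*_{t-1}(x*_{t-1}) − y*_t(x*_t)‖² ). -/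
open Finset

private lemma shift_sum (T : ℕ) (f : ℕ → ℝ) :
    ∑ t ∈ Finset.Icc 2 T, f (t-1) = ∑ t ∈ Finset.Icc 1 (T-1), f t := by
  apply Finset.sum_nbij' (fun t => t - 1) (fun t => t + 1) <;> intros <;>
    simp_all <;> omega

set_option maxHeartbeats 1000000 in
/-- Inner-estimation-error lemma (squared norms): under the per-round contraction
`‖y_{t+1} − y*_t(x_t)‖ ≤ ρ_t‖y_t − y*_t(x_t)‖` with nonincreasing `ρ_t` and
`ρ_1 < 1/√2`, the sum of squared inner errors is bounded in terms of the squared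
path-lengths. -/
theorem inner_error_squared_bound
    (d1 d2 T : ℕ) (hT : 1 ≤ T)
    (ρ : ℕ → ℝ)
    (hmono : ∀ s t, 1 ≤ s → s ≤ t → t ≤ T → ρ t ≤ ρ s)
    (hpos : ∀ t ∈ Finset.Icc 1 T, 0 < ρ t)
    (hρ1 : ρ 1 < 1 / Real.sqrt 2)
    (Ly : ℝ) (hLy : 0 < Ly)
    (x xstar : ℕ → EuclideanSpace ℝ (Fin d1))
    (ystar : ℕ → EuclideanSpace ℝ (Fin d1) → EuclideanSpace ℝ (Fin d2))
    (hylip : ∀ t ∈ Finset.Icc 1 T, ∀ a b, ‖ystar t a - ystar t b‖ ≤ Ly * ‖a - b‖)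
    (y : ℕ → EuclideanSpace ℝ (Fin d2))
    (hcontract : ∀ t ∈ Finset.Icc 1 T,
      ‖y (t + 1) - ystar t (x t)‖ ≤ ρ t * ‖y t - ystar t (x t)‖) :
    ∑ t ∈ Finset.Icc 1 T, ‖y (t + 1) - ystar t (x t)‖ ^ 2
      ≤ (1 / (1 - 2 * ρ 1 ^ 2)) *
        (ρ 1 ^ 2 * ‖y 1 - ystar 1 (x 1)‖ ^ 2
          + 12 * Ly ^ 2 * ∑ t ∈ Finset.Icc 1 T, ρ t ^ 2 * ‖x t - xstar t‖ ^ 2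
          + 6 * ∑ t ∈ Finset.Icc 2 T,
              ρ t ^ 2 * ‖ystar (t - 1) (xstar (t - 1)) - ystar t (xstar t)‖ ^ 2) := by
  have h1T : (1 : ℕ) ∈ Finset.Icc 1 T := by simp [hT]
  have hρ1pos : 0 < ρ 1 := hpos 1 h1T
  have hsqrt2 : Real.sqrt 2 ^ 2 = 2 := Real.sq_sqrt (by norm_num)
  have hsqrt2pos : 0 < Real.sqrt 2 := Real.sqrt_pos.mpr (by norm_num)
  have hρ1sq : ρ 1 ^ 2 < 1 / 2 := by
    have h' : ρ 1 * Real.sqrt 2 < 1 := (lt_div_iff₀ hsqrt2pos).mp hρ1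
    nlinarith [h', mul_pos hρ1pos hsqrt2pos, hsqrt2]
  have hdenom : 0 < 1 - 2 * ρ 1 ^ 2 := by linarith
  -- abbreviations
  set A : ℕ → ℝ := fun t => ‖y (t + 1) - ystar t (x t)‖ ^ 2 with hA
  set X : ℕ → ℝ := fun t => ‖x t - xstar t‖ ^ 2 with hX
  set D : ℕ → ℝ := fun t => ‖ystar (t - 1) (xstar (t - 1)) - ystar t (xstar t)‖ ^ 2 with hD
  have hAnn : ∀ t, 0 ≤ A t := fun t => sq_nonneg _
  have hXnn : ∀ t, 0 ≤ X t := fun t => sq_nonneg _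
  have hDnn : ∀ t, 0 ≤ D t := fun t => sq_nonneg _
  set S : ℝ := ∑ t ∈ Finset.Icc 1 T, A t with hS
  -- squared contraction
  have hsq : ∀ t ∈ Finset.Icc 1 T, A t ≤ ρ t ^ 2 * ‖y t - ystar t (x t)‖ ^ 2 := by
    intro t ht
    have h := hcontract t ht
    have h2 := pow_le_pow_left₀ (norm_nonneg _) h 2
    calc A t ≤ (ρ t * ‖y t - ystar t (x t)‖) ^ 2 := h2
    _ = ρ t ^ 2 * ‖y t - ystar t (x t)‖ ^ 2 := by ring
  -- pointwise key bound for t ≥ 2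
  have hkey : ∀ t ∈ Finset.Icc 2 T, A t ≤
      ρ t ^ 2 * (2 * A (t - 1) + 6 * Ly ^ 2 * X (t - 1) + 6 * Ly ^ 2 * X t + 6 * D t) := by
    intro t ht
    simp only [Finset.mem_Icc] at ht
    have ht1 : t - 1 + 1 = t := by omega
    have htm : t - 1 ∈ Finset.Icc 1 T := by simp; omega
    have htT : t ∈ Finset.Icc 1 T := by simp; omega
    have hb := hylip (t - 1) htm (x (t - 1)) (xstar (t - 1))
    have hd := hylip t htT (xstar t) (x t)
    have hd' : ‖ystar t (xstar t) - ystar t (x t)‖ ≤ Ly * ‖x t - xstar t‖ := by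
      rwa [norm_sub_rev (xstar t) (x t)] at hd
    have htri : ‖y t - ystar t (x t)‖ ≤
        ‖y t - ystar (t - 1) (x (t - 1))‖
        + ‖ystar (t - 1) (x (t - 1)) - ystar (t - 1) (xstar (t - 1))‖
        + ‖ystar (t - 1) (xstar (t - 1)) - ystar t (xstar t)‖
        + ‖ystar t (xstar t) - ystar t (x t)‖ := by
      have heq : y t - ystar t (x t) =
          (y t - ystar (t - 1) (x (t - 1)))
          + (ystar (t - 1) (x (t - 1)) - ystar (t - 1) (xstar (t - 1)))
          + (ystar (t - 1) (xstar (t - 1)) - ystar t (xstar t))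
          + (ystar t (xstar t) - ystar t (x t)) := by abel
      rw [heq]
      exact le_trans (norm_add_le _ _) (by
        gcongr
        exact le_trans (norm_add_le _ _) (by gcongr; exact norm_add_le _ _))
    set u := ‖y t - ystar (t - 1) (x (t - 1))‖ with hu
    set b := ‖ystar (t - 1) (x (t - 1)) - ystar (t - 1) (xstar (t - 1))‖ with hbdef
    set c := ‖ystar (t - 1) (xstar (t - 1)) - ystar t (xstar t)‖ with hcdef
    set e := ‖ystar t (xstar t) - ystar t (x t)‖ with hedef
    have hm : ‖y t - ystar t (x t)‖ ^ 2 ≤ (u + b + c + e) ^ 2 :=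
      pow_le_pow_left₀ (norm_nonneg _) htri 2
    have hinner : ‖y t - ystar t (x t)‖ ^ 2 ≤
        2 * A (t - 1) + 6 * Ly ^ 2 * X (t - 1) + 6 * Ly ^ 2 * X t + 6 * D t := by
      have hAeq : A (t - 1) = u ^ 2 := by simp only [hA, ht1, hu]
      have hDeq : D t = c ^ 2 := by simp only [hD, hcdef]
      have hbsq : b ^ 2 ≤ Ly ^ 2 * X (t - 1) := by
        have := pow_le_pow_left₀ (norm_nonneg _) hb 2
        calc b ^ 2 ≤ (Ly * ‖x (t - 1) - xstar (t - 1)‖) ^ 2 := this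
        _ = Ly ^ 2 * X (t - 1) := by simp only [hX]; ring
      have hesq : e ^ 2 ≤ Ly ^ 2 * X t := by
        have := pow_le_pow_left₀ (norm_nonneg _) hd' 2
        calc e ^ 2 ≤ (Ly * ‖x t - xstar t‖) ^ 2 := this
        _ = Ly ^ 2 * X t := by simp only [hX]; ring
      rw [hAeq, hDeq]
      nlinarith [hm, sq_nonneg (u - b - c - e), sq_nonneg (b - c), sq_nonneg (c - e),
        sq_nonneg (b - e), hbsq, hesq]
    have hρnn : 0 ≤ ρ t ^ 2 := sq_nonneg _
    calc A t ≤ ρ t ^ 2 * ‖y t - ystar t (x t)‖ ^ 2 := hsq t htT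
    _ ≤ ρ t ^ 2 * (2 * A (t - 1) + 6 * Ly ^ 2 * X (t - 1) + 6 * Ly ^ 2 * X t + 6 * D t) :=
        mul_le_mul_of_nonneg_left hinner hρnn
  -- relaxed pointwise bound using monotonicity of ρ
  have hkey2 : ∀ t ∈ Finset.Icc 2 T, A t ≤
      2 * ρ 1 ^ 2 * A (t - 1) + 6 * Ly ^ 2 * (ρ (t - 1) ^ 2 * X (t - 1))
        + 6 * Ly ^ 2 * (ρ t ^ 2 * X t) + 6 * (ρ t ^ 2 * D t) := by
    intro t ht
    simp only [Finset.mem_Icc] at ht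
    have hρtpos : 0 < ρ t := hpos t (by simp; omega)
    have hle1 : ρ t ≤ ρ 1 := hmono 1 t le_rfl (by omega) ht.2
    have hlem : ρ t ≤ ρ (t - 1) := hmono (t - 1) t (by omega) (by omega) ht.2
    have h1 : ρ t ^ 2 ≤ ρ 1 ^ 2 := pow_le_pow_left₀ hρtpos.le hle1 2
    have h2 : ρ t ^ 2 ≤ ρ (t - 1) ^ 2 := pow_le_pow_left₀ hρtpos.le hlem 2
    have hk := hkey t (by simp; omega)
    have hk' : A t ≤ 2 * (ρ t ^ 2 * A (t - 1)) + 6 * Ly ^ 2 * (ρ t ^ 2 * X (t - 1))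
        + 6 * Ly ^ 2 * (ρ t ^ 2 * X t) + 6 * (ρ t ^ 2 * D t) := by
      calc A t ≤ ρ t ^ 2 * (2 * A (t - 1) + 6 * Ly ^ 2 * X (t - 1)
            + 6 * Ly ^ 2 * X t + 6 * D t) := hk
      _ = 2 * (ρ t ^ 2 * A (t - 1)) + 6 * Ly ^ 2 * (ρ t ^ 2 * X (t - 1))
            + 6 * Ly ^ 2 * (ρ t ^ 2 * X t) + 6 * (ρ t ^ 2 * D t) := by ring
    have f1 : ρ t ^ 2 * A (t - 1) ≤ ρ 1 ^ 2 * A (t - 1) :=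
      mul_le_mul_of_nonneg_right h1 (hAnn _)
    have f2 : ρ t ^ 2 * X (t - 1) ≤ ρ (t - 1) ^ 2 * X (t - 1) :=
      mul_le_mul_of_nonneg_right h2 (hXnn _)
    have f2' : 6 * Ly ^ 2 * (ρ t ^ 2 * X (t - 1)) ≤ 6 * Ly ^ 2 * (ρ (t - 1) ^ 2 * X (t - 1)) := by
      apply mul_le_mul_of_nonneg_left f2; positivity
    linarith
  -- sum over Icc 2 T
  have hsum2 : ∑ t ∈ Finset.Icc 2 T, A t ≤
      2 * ρ 1 ^ 2 * ∑ t ∈ Finset.Icc 2 T, A (t - 1)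
      + 6 * Ly ^ 2 * ∑ t ∈ Finset.Icc 2 T, ρ (t - 1) ^ 2 * X (t - 1)
      + 6 * Ly ^ 2 * ∑ t ∈ Finset.Icc 2 T, ρ t ^ 2 * X t
      + 6 * ∑ t ∈ Finset.Icc 2 T, ρ t ^ 2 * D t := by
    rw [Finset.mul_sum, Finset.mul_sum, Finset.mul_sum, Finset.mul_sum,
      ← Finset.sum_add_distrib, ← Finset.sum_add_distrib, ← Finset.sum_add_distrib]
    exact Finset.sum_le_sum hkey2
  -- shift sums
  have hshiftA : ∑ t ∈ Finset.Icc 2 T, A (t - 1) ≤ S := by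
    rw [shift_sum]
    apply Finset.sum_le_sum_of_subset_of_nonneg
    · apply Finset.Icc_subset_Icc_right; omega
    · intro i _ _; exact hAnn i
  have hshiftX : ∑ t ∈ Finset.Icc 2 T, ρ (t - 1) ^ 2 * X (t - 1) ≤
      ∑ t ∈ Finset.Icc 1 T, ρ t ^ 2 * X t := by
    rw [shift_sum T (fun t => ρ t ^ 2 * X t)]
    apply Finset.sum_le_sum_of_subset_of_nonneg
    · apply Finset.Icc_subset_Icc_right; omega
    · intro i _ _; exact mul_nonneg (sq_nonneg _) (hXnn i)
  have hXsub : ∑ t ∈ Finset.Icc 2 T, ρ t ^ 2 * X t ≤ ∑ t ∈ Finset.Icc 1 T, ρ t ^ 2 * X t := by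
    apply Finset.sum_le_sum_of_subset_of_nonneg
    · apply Finset.Icc_subset_Icc_left; omega
    · intro i _ _; exact mul_nonneg (sq_nonneg _) (hXnn i)
  -- split S
  have hins : Finset.Icc 1 T = insert 1 (Finset.Icc 2 T) := by
    ext a; simp; omega
  have hsplit : S = A 1 + ∑ t ∈ Finset.Icc 2 T, A t := by
    rw [hS, hins, Finset.sum_insert (by simp)]
  have hA1 : A 1 ≤ ρ 1 ^ 2 * ‖y 1 - ystar 1 (x 1)‖ ^ 2 := hsq 1 h1T
  have g1 : 2 * ρ 1 ^ 2 * ∑ t ∈ Finset.Icc 2 T, A (t - 1) ≤ 2 * ρ 1 ^ 2 * S := by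
    apply mul_le_mul_of_nonneg_left hshiftA; positivity
  have g2 : 6 * Ly ^ 2 * ∑ t ∈ Finset.Icc 2 T, ρ (t - 1) ^ 2 * X (t - 1)
      ≤ 6 * Ly ^ 2 * ∑ t ∈ Finset.Icc 1 T, ρ t ^ 2 * X t := by
    apply mul_le_mul_of_nonneg_left hshiftX; positivity
  have g3 : 6 * Ly ^ 2 * ∑ t ∈ Finset.Icc 2 T, ρ t ^ 2 * X t
      ≤ 6 * Ly ^ 2 * ∑ t ∈ Finset.Icc 1 T, ρ t ^ 2 * X t := by
    apply mul_le_mul_of_nonneg_left hXsub; positivity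
  have hmain : S ≤ ρ 1 ^ 2 * ‖y 1 - ystar 1 (x 1)‖ ^ 2 + 2 * ρ 1 ^ 2 * S
      + 12 * Ly ^ 2 * ∑ t ∈ Finset.Icc 1 T, ρ t ^ 2 * X t
      + 6 * ∑ t ∈ Finset.Icc 2 T, ρ t ^ 2 * D t := by
    linarith [hsum2, g1, g2, g3]
  rw [one_div, ← div_eq_inv_mul, le_div_iff₀ hdenom]
  nlinarith [hmain]
end

section
/- Let T ≥ 1, let ρ_1 ≥ ρ_2 ≥ … ≥ ρ_T > 0 with ρ_1 < 1, and let L_y > 0. For t = 1,…,T let x_t, x*_t ∈ ℝ^{d1}, let y*_t : ℝ^{d1} → ℝ^{d2} be L_y-Lipschitz, and let y_1,…,y_{T+1} ∈ ℝ^{d2} satisfy the contraction ‖y_{t+1} − y*_t(x_t)‖ ≤ ρ_t·‖y_t − y*_t(x_t)‖ for every t ∈ {1,…,T}. Then Σ_{t=1}^T ‖y_{t+1} − y*_t(x_t)‖ ≤ (1/(1 − ρ_1))·( ρ_1·‖y_1 − y*_1(x_1)‖ + 2·L_y·Σ_{t=1}^T ρ_t·‖x_t − x*_t‖ + Σ_{t=2}^T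 ρ_t·‖y*_{t-1}(x*_{t-1}) − y*_t(x*_t)‖ ). -/
/-!
With `e t = ‖y (t + 1) - y*_t(x_t)‖`, the contraction at round `t` is towards `y*_t(x_t)` while
`y t` was produced aiming at `y*_{t-1}(x_{t-1})`; the triangle inequality and `ρ t ≤ ρ 1` give
`e t ≤ ρ 1 * e (t - 1) + ρ t * ‖y*_{t-1}(x_{t-1}) - y*_t(x_t)‖`. Summed over `t`, the errors
reappear on the right with factor `ρ 1 < 1` and are absorbed on the left. The movement of the
target is at most the path length of `y*_t(x*_t)` plus `L_y ‖x_s - x*_s‖` at `s = t - 1, t`,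
and monotonicity of `ρ` charges the `s = t - 1` term to round `t - 1`.
-/

open Finset

section

variable {E : Type*} [SeminormedAddCommGroup E]

theorem norm_sub_le_of_contract {y y' w z : E} {r c : ℝ} (hr : 0 ≤ r) (hrc : r ≤ c)
    (h : ‖y' - z‖ ≤ r * ‖y - z‖) : ‖y' - z‖ ≤ c * ‖y - w‖ + r * ‖w - z‖ :=
  calc ‖y' - z‖ ≤ r * ‖y - z‖ := h
    _ ≤ r * (‖y - w‖ + ‖w - z‖) := by gcongr; exact norm_sub_le_norm_sub_add_norm_sub _ _ _
    _ ≤ c * ‖y - w‖ + r * ‖w - z‖ := by nlinarith [norm_nonneg (y - w)]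

theorem norm_sub_le_of_lipschitz {F : Type*} [SeminormedAddCommGroup F] {f g : E → F} {K : ℝ}
    (hf : ∀ a b, ‖f a - f b‖ ≤ K * ‖a - b‖) (hg : ∀ a b, ‖g a - g b‖ ≤ K * ‖a - b‖)
    (a a' b b' : E) : ‖f a - g b‖ ≤ K * ‖a - a'‖ + ‖f a' - g b'‖ + K * ‖b - b'‖ := by
  have hgb := hg b' b
  rw [norm_sub_rev b'] at hgb
  calc ‖f a - g b‖ ≤ ‖f a - g b'‖ + ‖g b' - g b‖ := norm_sub_le_norm_sub_add_norm_sub _ _ _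
    _ ≤ ‖f a - f a'‖ + ‖f a' - g b'‖ + ‖g b' - g b‖ := by
        gcongr; exact norm_sub_le_norm_sub_add_norm_sub _ _ _
    _ ≤ K * ‖a - a'‖ + ‖f a' - g b'‖ + K * ‖b - b'‖ := by gcongr; exact hf a a'

end

theorem sum_Icc_two_pred_le {f : ℕ → ℝ} {T : ℕ} (hf : ∀ t ∈ Icc 1 T, 0 ≤ f t) :
    ∑ t ∈ Icc 2 T, f (t - 1) ≤ ∑ t ∈ Icc 1 T, f t := by
  rw [← sum_image (g := (· - 1)) fun s hs t ht hst => by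
    simp only [coe_Icc, Set.mem_Icc] at hs ht hst; omega]
  refine sum_le_sum_of_subset_of_nonneg (fun t ht => ?_) fun t ht _ => hf t ht
  simp only [mem_image, mem_Icc] at ht ⊢
  omega

theorem one_sub_mul_sum_Icc_le {e u : ℕ → ℝ} {a c : ℝ} {T : ℕ} (hT : 1 ≤ T) (hc : 0 ≤ c)
    (he : 0 ≤ e T) (h1 : e 1 ≤ a) (hstep : ∀ t ∈ Icc 2 T, e t ≤ c * e (t - 1) + u t) :
    (1 - c) * ∑ t ∈ Icc 1 T, e t ≤ a + ∑ t ∈ Icc 2 T, u t := by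
  suffices key : ∀ n, 1 ≤ n → n ≤ T →
      (1 - c) * ∑ t ∈ Icc 1 n, e t + c * e n ≤ a + ∑ t ∈ Icc 2 n, u t by
    nlinarith [key T hT le_rfl]
  intro n hn hnT
  induction n, hn using Nat.le_induction with
  | base => simp only [Icc_self, sum_singleton, Icc_eq_empty_of_lt one_lt_two, sum_empty]; linarith
  | succ n hn ih =>
    rw [sum_Icc_succ_top (by omega), sum_Icc_succ_top (by omega)]
    have hn1 := hstep (n + 1) (mem_Icc.2 ⟨by omega, hnT⟩)
    rw [Nat.add_sub_cancel] at hn1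
    nlinarith [ih (by omega)]

theorem sum_mul_norm_sub_pred_le {E F : Type*} [SeminormedAddCommGroup E]
    [SeminormedAddCommGroup F] {T : ℕ} {ρ : ℕ → ℝ} {K : ℝ} {f : ℕ → E → F} {x x' : ℕ → E}
    (hρ : ∀ t ∈ Icc 1 T, 0 ≤ ρ t) (hanti : ∀ t ∈ Icc 2 T, ρ t ≤ ρ (t - 1)) (hK : 0 ≤ K)
    (hf : ∀ t ∈ Icc 1 T, ∀ a b, ‖f t a - f t b‖ ≤ K * ‖a - b‖) :
    ∑ t ∈ Icc 2 T, ρ t * ‖f (t - 1) (x (t - 1)) - f t (x t)‖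
      ≤ 2 * K * ∑ t ∈ Icc 1 T, ρ t * ‖x t - x' t‖
        + ∑ t ∈ Icc 2 T, ρ t * ‖f (t - 1) (x' (t - 1)) - f t (x' t)‖ := by
  have hX : ∀ t ∈ Icc 1 T, 0 ≤ ρ t * ‖x t - x' t‖ := fun t ht =>
    mul_nonneg (hρ t ht) (norm_nonneg _)
  calc _ ≤ ∑ t ∈ Icc 2 T, (K * (ρ (t - 1) * ‖x (t - 1) - x' (t - 1)‖)
          + ρ t * ‖f (t - 1) (x' (t - 1)) - f t (x' t)‖ + K * (ρ t * ‖x t - x' t‖)) := by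
        refine sum_le_sum fun t ht => ?_
        have ht1 : t ∈ Icc 1 T := by simp only [mem_Icc] at ht ⊢; omega
        have htm1 : t - 1 ∈ Icc 1 T := by simp only [mem_Icc] at ht ⊢; omega
        have hmove := norm_sub_le_of_lipschitz (hf (t - 1) htm1) (hf t ht1)
          (x (t - 1)) (x' (t - 1)) (x t) (x' t)
        nlinarith [hρ t ht1, hanti t ht, mul_nonneg hK (norm_nonneg (x (t - 1) - x' (t - 1)))]
    _ ≤ K * ∑ t ∈ Icc 1 T, ρ t * ‖x t - x' t‖
          + ∑ t ∈ Icc 2 T, ρ t * ‖f (t - 1) (x' (t - 1)) - f t (x' t)‖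
          + K * ∑ t ∈ Icc 1 T, ρ t * ‖x t - x' t‖ := by
        rw [sum_add_distrib, sum_add_distrib, ← mul_sum, ← mul_sum]
        gcongr K * ?_ + _ + K * ?_
        · exact sum_Icc_two_pred_le hX
        · exact sum_le_sum_of_subset_of_nonneg (Icc_subset_Icc_left one_le_two)
            fun t ht _ => hX t ht
    _ = _ := by ring

/-- Inner-estimation-error lemma (first powers): under the per-round contraction
`‖y_{t+1} − y*_t(x_t)‖ ≤ ρ_t‖y_t − y*_t(x_t)‖` with nonincreasing `ρ_t` and
`ρ_1 < 1`, the sum of inner errors is bounded in terms of the path-lengths. -/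
theorem inner_error_first_power_bound
    (d1 d2 T : ℕ) (hT : 1 ≤ T)
    (ρ : ℕ → ℝ)
    (hmono : ∀ s t, 1 ≤ s → s ≤ t → t ≤ T → ρ t ≤ ρ s)
    (hpos : ∀ t ∈ Finset.Icc 1 T, 0 < ρ t)
    (hρ1 : ρ 1 < 1)
    (Ly : ℝ) (hLy : 0 < Ly)
    (x xstar : ℕ → EuclideanSpace ℝ (Fin d1))
    (ystar : ℕ → EuclideanSpace ℝ (Fin d1) → EuclideanSpace ℝ (Fin d2))
    (hylip : ∀ t ∈ Finset.Icc 1 T, ∀ a b, ‖ystar t a - ystar t b‖ ≤ Ly * ‖a - b‖)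
    (y : ℕ → EuclideanSpace ℝ (Fin d2))
    (hcontract : ∀ t ∈ Finset.Icc 1 T,
      ‖y (t + 1) - ystar t (x t)‖ ≤ ρ t * ‖y t - ystar t (x t)‖) :
    ∑ t ∈ Finset.Icc 1 T, ‖y (t + 1) - ystar t (x t)‖
      ≤ (1 / (1 - ρ 1)) *
        (ρ 1 * ‖y 1 - ystar 1 (x 1)‖
          + 2 * Ly * ∑ t ∈ Finset.Icc 1 T, ρ t * ‖x t - xstar t‖
          + ∑ t ∈ Finset.Icc 2 T,
              ρ t * ‖ystar (t - 1) (xstar (t - 1)) - ystar t (xstar t)‖) := by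
  have h1 : 1 ∈ Icc 1 T := mem_Icc.2 ⟨le_rfl, hT⟩
  have hpred {t : ℕ} (ht : t ∈ Icc 2 T) : t ∈ Icc 1 T ∧ t - 1 ∈ Icc 1 T ∧ t - 1 + 1 = t := by
    simp only [mem_Icc] at ht ⊢; omega
  have hrec := one_sub_mul_sum_Icc_le (e := fun t => ‖y (t + 1) - ystar t (x t)‖)
    (u := fun t => ρ t * ‖ystar (t - 1) (x (t - 1)) - ystar t (x t)‖) hT (hpos 1 h1).le
    (norm_nonneg _) (hcontract 1 h1) fun t ht => by
      obtain ⟨ht1, -, hsucc⟩ := hpred ht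
      simp only [hsucc]
      exact norm_sub_le_of_contract (hpos t ht1).le
        (hmono 1 t le_rfl (mem_Icc.1 ht1).1 (mem_Icc.1 ht1).2) (hcontract t ht1)
  have hdrift := sum_mul_norm_sub_pred_le (x := x) (x' := xstar) (fun t ht => (hpos t ht).le)
    (fun t ht => hmono (t - 1) t (mem_Icc.1 (hpred ht).2.1).1 (Nat.sub_le t 1)
      (mem_Icc.1 (hpred ht).1).2) hLy.le hylip
  rw [one_div, inv_mul_eq_div, le_div_iff₀ (by linarith)]
  linarith
end

section
/- Fix positive constants μ_f, L_f, L_y, M_f, ℓ_0, D, E_0 and c with 0 < c ≤ μ_f²/(8(L_f² + L_y²)); set α := 4c/μ_f, and let ρ ≥ 0 satisfy ρ² ≤ 1/(12·M_f²·(1 + 1/c) + 2). Then there exists a constant C > 0, depending only on (μ_f, L_f, L_y, M_f, ℓ_0, D, c, E_0) and not on T, with the following property. Let X ⊆ ℝ^{d1} be nonempty, closed and convex with diameter at most D, let T ≥ 1, and for each t ∈ {1,…,T}: let φ_t : ℝ^{d1} → ℝ be differentiable, μ_f-strongly convex on X, with ∇φ_t L_f-Lipschitz on X and ‖∇φ_t(x)‖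 ≤ ℓ_0 for all x ∈ X; let x*_t ∈ argmin_{x ∈ X} φ_t(x); and let y*_t : ℝ^{d1} → ℝ^{d2} be L_y-Lipschitz. Suppose x_1 ∈ X, ‖y_1 − y*_1(x_1)‖ ≤ E_0, and for every t ∈ {1,…,T}: ‖y_{t+1} − y*_t(x_t)‖ ≤ ρ·‖y_t − y*_t(x_t)‖, and x_{t+1} = Π_X(x_t − α·g̃_t) for some g̃_t ∈ ℝ^{d1} with ‖g̃_t − ∇φ_t(x_t)‖ ≤ M_f·‖y_{t+1} − y*_t(x_t)‖. Then Σ_{t=1}^T (φ_t(x_t) − φ_t(x*_t)) ≤ C·( 1 + P_{2,T} + Σ_{t=1}^T ‖∇φ_t(x*_t)‖ + Y_{2,T} ). -/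
open Finset


open Filter Topology Set Finset

local notation "⟪" x ", " y "⟫" => @inner ℝ _ _ x y

section Helpers

lemma weighted_split {η s1 s2 : ℝ} (hη : 0 < η) :
    (s1 + s2) ^ 2 ≤ (1 + η) * s1 ^ 2 + (1 + 1 / η) * s2 ^ 2 := by
  have e : (1 + η) * s1 ^ 2 + (1 + 1 / η) * s2 ^ 2 - (s1 + s2) ^ 2
      = (1 / η) * (η * s1 - s2) ^ 2 := by
    field_simp
    ring
  nlinarith [mul_nonneg (le_of_lt (one_div_pos.2 hη)) (sq_nonneg (η * s1 - s2))]

lemma sq_mono {x y : ℝ} (hx : 0 ≤ x) (h : x ≤ y) : x ^ 2 ≤ y ^ 2 := by nlinarith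

lemma delta_step {ρ Ly δ δ' a a' q : ℝ} (hδ' : δ' ≤ ρ * δ + Ly * a + Ly * a' + q)
    (h0 : 0 ≤ δ') :
    δ' ^ 2 ≤ 2 * ρ ^ 2 * δ ^ 2 + 6 * Ly ^ 2 * a ^ 2 + 6 * Ly ^ 2 * a' ^ 2 + 6 * q ^ 2 := by
  have h5 : δ' ^ 2 ≤ (ρ * δ + Ly * a + Ly * a' + q) ^ 2 := sq_mono h0 hδ'
  nlinarith [sq_nonneg (ρ * δ - (Ly * a + Ly * a' + q)), sq_nonneg (Ly * a - Ly * a'),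
    sq_nonneg (Ly * a - q), sq_nonneg (Ly * a' - q)]

lemma x_step_scalar {η a a' s1 s3 e p lam0 Bv : ℝ}
    (hη : 0 < η) (ha' : 0 ≤ a') (hs3 : 0 ≤ s3)
    (h1 : s1 ^ 2 ≤ lam0 * a ^ 2 + Bv) (h2 : s3 ≤ s1 + e) (h3 : a' ≤ s3 + p) :
    a' ^ 2 ≤ (1 + η) ^ 2 * lam0 * a ^ 2 + (1 + η) ^ 2 * Bv
      + (1 + η) * (1 + 1 / η) * e ^ 2 + (1 + 1 / η) * p ^ 2 := by
  have w1 : a' ^ 2 ≤ (1 + η) * s3 ^ 2 + (1 + 1 / η) * p ^ 2 :=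
    le_trans (sq_mono ha' h3) (weighted_split hη)
  have w2 : s3 ^ 2 ≤ (1 + η) * s1 ^ 2 + (1 + 1 / η) * e ^ 2 :=
    le_trans (sq_mono hs3 h2) (weighted_split hη)
  have hη1 : (0:ℝ) ≤ 1 + η := by linarith
  have w3 : (1 + η) * s3 ^ 2 ≤ (1 + η) * ((1 + η) * s1 ^ 2 + (1 + 1 / η) * e ^ 2) :=
    mul_le_mul_of_nonneg_left w2 hη1
  have w4 : (1 + η) ^ 2 * s1 ^ 2 ≤ (1 + η) ^ 2 * (lam0 * a ^ 2 + Bv) :=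
    mul_le_mul_of_nonneg_left h1 (by positivity)
  nlinarith [w1, w3, w4]

lemma coeff_le {μf Lf Ly c : ℝ} (hμf : 0 < μf) (hc : 0 < c)
    (hLf : 0 < Lf) (hLy : 0 < Ly) (hcle : c ≤ μf ^ 2 / (8 * (Lf ^ 2 + Ly ^ 2))) :
    1 - 2 * (4 * c / μf) * μf + 2 * (4 * c / μf) ^ 2 * Lf ^ 2
      ≤ 1 - 4 * c * (1 + 8 * c * Ly ^ 2 / μf ^ 2) := by
  have h8 : c * (8 * (Lf ^ 2 + Ly ^ 2)) ≤ μf ^ 2 := (le_div_iff₀ (by positivity)).1 hcle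
  have hμ2 : (0:ℝ) < μf ^ 2 := by positivity
  have key : (1 - 2 * (4 * c / μf) * μf + 2 * (4 * c / μf) ^ 2 * Lf ^ 2) * μf ^ 2
      ≤ (1 - 4 * c * (1 + 8 * c * Ly ^ 2 / μf ^ 2)) * μf ^ 2 := by
    have e1 : (1 - 2 * (4 * c / μf) * μf + 2 * (4 * c / μf) ^ 2 * Lf ^ 2) * μf ^ 2
        = μf ^ 2 - 8 * c * μf ^ 2 + 32 * c ^ 2 * Lf ^ 2 := by field_simp; ring
    have e2 : (1 - 4 * c * (1 + 8 * c * Ly ^ 2 / μf ^ 2)) * μf ^ 2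
        = μf ^ 2 - 4 * c * μf ^ 2 - 32 * c ^ 2 * Ly ^ 2 := by field_simp; ring
    rw [e1, e2]
    nlinarith [mul_le_mul_of_nonneg_left h8 (by positivity : (0:ℝ) ≤ 4 * c)]
  exact le_of_mul_le_mul_right key hμ2

lemma crux_core {c l u m r : ℝ} (hc : 0 < c) (hl0 : 0 < l) (hu : u = c * (1 + l))
    (hm0 : 0 ≤ m) (hr : 0 ≤ r) (h2r : 2 * r < 1)
    (hmr : m * (12 * (1 + 1 / c)) ≤ 1 - 2 * r) :
    24 * c * l * ((1 + u) * (1 + 1 / u)) * m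
      < (1 - (1 + u) ^ 2 * (1 - 4 * u)) * (1 - 2 * r) := by
  have hu0 : 0 < u := by rw [hu]; positivity
  have hm : m ≤ (1 - 2 * r) * c / (12 * (1 + c)) := by
    rw [le_div_iff₀ (by positivity : (0:ℝ) < 12 * (1 + c))]
    have h := mul_le_mul_of_nonneg_right hmr hc.le
    have ec : (1 + 1 / c) * c = 1 + c := by field_simp; ring
    have e : m * (12 * (1 + 1 / c)) * c = m * (12 * (1 + c)) := by
      calc m * (12 * (1 + 1 / c)) * c = m * 12 * ((1 + 1 / c) * c) := by ring
        _ = m * (12 * (1 + c)) := by rw [ec]; ring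
    rw [e] at h
    linarith
  have hK0 : (0:ℝ) ≤ 24 * c * l * ((1 + u) * (1 + 1 / u)) := by positivity
  have hstep1 : 24 * c * l * ((1 + u) * (1 + 1 / u)) * m
      ≤ 24 * c * l * ((1 + u) * (1 + 1 / u)) * ((1 - 2 * r) * c / (12 * (1 + c))) :=
    mul_le_mul_of_nonneg_left hm hK0
  have e2 : 24 * c * l * ((1 + u) * (1 + 1 / u)) * ((1 - 2 * r) * c / (12 * (1 + c)))
      = (2 * c * (c * l) * (1 + u) ^ 2 / (u * (1 + c))) * (1 - 2 * r) := by
    field_simp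
    ring
  have hcu : c * l = u - c := by rw [hu]; ring
  have hFP : 2 * c * (c * l) * (1 + u) ^ 2 < (2 * u + 7 * u ^ 2 + 4 * u ^ 3) * (u * (1 + c)) := by
    rw [hcu]
    have key1 : 4 * c * (u - c) ≤ u ^ 2 := by nlinarith [sq_nonneg (u - 2 * c)]
    have key3 : 4 * c * (u - c) * (1 + u) ^ 2 ≤ u ^ 2 * (1 + u) ^ 2 :=
      mul_le_mul_of_nonneg_right key1 (sq_nonneg _)
    have key5 : (0:ℝ) ≤ 2 * (2 * u + 7 * u ^ 2 + 4 * u ^ 3) * (u * c) := by positivity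
    nlinarith [key3, key5, pow_pos hu0 2, pow_pos hu0 3, pow_pos hu0 4]
  have hstep2 : 2 * c * (c * l) * (1 + u) ^ 2 / (u * (1 + c)) < 2 * u + 7 * u ^ 2 + 4 * u ^ 3 := by
    rw [div_lt_iff₀ (by positivity : (0:ℝ) < u * (1 + c))]
    exact hFP
  have hR : 1 - (1 + u) ^ 2 * (1 - 4 * u) = 2 * u + 7 * u ^ 2 + 4 * u ^ 3 := by ring
  calc 24 * c * l * ((1 + u) * (1 + 1 / u)) * m
      ≤ (2 * c * (c * l) * (1 + u) ^ 2 / (u * (1 + c))) * (1 - 2 * r) := by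
        rw [← e2]; exact hstep1
    _ < (2 * u + 7 * u ^ 2 + 4 * u ^ 3) * (1 - 2 * r) :=
        mul_lt_mul_of_pos_right hstep2 (by linarith)
    _ = (1 - (1 + u) ^ 2 * (1 - 4 * u)) * (1 - 2 * r) := by rw [hR]

lemma crux_ineq {μf Lf Ly Mf c ρ : ℝ}
    (hμf : 0 < μf) (hLf : 0 < Lf) (hLy : 0 < Ly) (hMf : 0 < Mf)
    (hc : 0 < c) (hcle : c ≤ μf ^ 2 / (8 * (Lf ^ 2 + Ly ^ 2)))
    (hρ0 : 0 ≤ ρ) (hρ : ρ ^ 2 ≤ 1 / (12 * Mf ^ 2 * (1 + 1 / c) + 2)) :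
    2 * ρ ^ 2 < 1 ∧
    12 * ((1 + c * (1 + 8 * c * Ly ^ 2 / μf ^ 2)) * (1 + 1 / (c * (1 + 8 * c * Ly ^ 2 / μf ^ 2)))
        * (4 * c / μf) ^ 2 * Mf ^ 2 * ρ ^ 2) * Ly ^ 2
      < (1 - (1 + c * (1 + 8 * c * Ly ^ 2 / μf ^ 2)) ^ 2
            * (1 - 4 * c * (1 + 8 * c * Ly ^ 2 / μf ^ 2))) * (1 - 2 * ρ ^ 2) := by
  have hdenom : (0:ℝ) < 12 * Mf ^ 2 * (1 + 1 / c) + 2 := by positivity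
  have hρ' : ρ ^ 2 * (12 * Mf ^ 2 * (1 + 1 / c) + 2) ≤ 1 := by
    rw [← le_div_iff₀ hdenom]; exact hρ
  have hsρ : 0 ≤ ρ ^ 2 := sq_nonneg ρ
  have h2r : 2 * ρ ^ 2 < 1 := by
    rcases eq_or_lt_of_le hsρ with h | h
    · rw [← h]; norm_num
    · nlinarith [mul_pos (by positivity : (0:ℝ) < 12 * Mf ^ 2 * (1 + 1 / c)) h]
  refine ⟨h2r, ?_⟩
  have hmr : (Mf ^ 2 * ρ ^ 2) * (12 * (1 + 1 / c)) ≤ 1 - 2 * ρ ^ 2 := by nlinarith [hρ']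
  set ℓ : ℝ := 8 * c * Ly ^ 2 / μf ^ 2 with hℓdef
  have hℓ0 : 0 < ℓ := by positivity
  have hLy2 : Ly ^ 2 = ℓ * μf ^ 2 / (8 * c) := by
    rw [hℓdef]; field_simp
  clear_value ℓ
  clear hℓdef hρ hρ' hcle hdenom
  have hrw : 4 * c * (1 + ℓ) = 4 * (c * (1 + ℓ)) := by ring
  rw [hrw]
  set u : ℝ := c * (1 + ℓ) with hudef
  have hu0 : 0 < u := by rw [hudef]; positivity
  clear_value u
  have hA : 12 * ((1 + u) * (1 + 1 / u) * (4 * c / μf) ^ 2 * Mf ^ 2 * ρ ^ 2) * Ly ^ 2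
      = 24 * c * ℓ * ((1 + u) * (1 + 1 / u)) * (Mf ^ 2 * ρ ^ 2) := by
    rw [hLy2]
    field_simp
    ring
  rw [hA]
  exact crux_core hc hℓ0 hudef (by positivity) hsρ h2r hmr

lemma sum_shift (f : ℕ → ℝ) (T : ℕ) (hT : 1 ≤ T) :
    ∑ t ∈ Finset.Icc 2 T, f t = ∑ t ∈ Finset.Icc 1 (T - 1), f (t + 1) := by
  have h : Finset.Icc 2 T = Finset.map (addRightEmbedding 1) (Finset.Icc 1 (T - 1)) := by
    rw [Finset.map_add_right_Icc]
    congr 1 <;> omega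
  rw [h, Finset.sum_map]
  simp [addRightEmbedding_apply]

lemma sum_drop_first (f : ℕ → ℝ) (T : ℕ) (hT : 1 ≤ T) :
    ∑ t ∈ Finset.Icc 2 T, f t = (∑ t ∈ Finset.Icc 1 T, f t) - f 1 := by
  have h : Finset.Icc 2 T = (Finset.Icc 1 T).erase 1 := by
    rw [Finset.Icc_erase_left]
    exact (Finset.Icc_add_one_left_eq_Ioc 1 T)
  rw [h]
  have hmem : 1 ∈ Finset.Icc 1 T := by simp [hT]
  have := Finset.add_sum_erase _ f hmem
  linarith

lemma sum_drop_last (f : ℕ → ℝ) (T : ℕ) (hT : 1 ≤ T) :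
    ∑ t ∈ Finset.Icc 1 (T - 1), f t = (∑ t ∈ Finset.Icc 1 T, f t) - f T := by
  have h : Finset.Icc 1 (T - 1) = (Finset.Icc 1 T).erase T := by
    ext a
    simp only [Finset.mem_Icc, Finset.mem_erase]
    omega
  rw [h]
  have hmem : T ∈ Finset.Icc 1 T := by simp [hT]
  have := Finset.add_sum_erase _ f hmem
  linarith

variable {F : Type*} [NormedAddCommGroup F] [InnerProductSpace ℝ F]

lemma convexOn_dirDeriv_le {X : Set F} {f : F → ℝ} {a b : F} {d : ℝ}
    (hf : ConvexOn ℝ X f) (ha : a ∈ X) (hb : b ∈ X)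
    (hderiv : HasDerivAt (fun s : ℝ => f (a + s • (b - a))) d 0) :
    d ≤ f b - f a := by
  set g : ℝ → ℝ := fun s => f (a + s • (b - a)) with hg
  have hslope : ∀ᶠ s in 𝓝[>] (0:ℝ), slope g 0 s ≤ f b - f a := by
    filter_upwards [Ioc_mem_nhdsGT zero_lt_one] with s hs
    have hs0 : 0 < s := hs.1
    have hcomb : g s ≤ (1 - s) * f a + s * f b := by
      have h3 := hf.2 ha hb (by linarith [hs.2] : (0:ℝ) ≤ 1 - s) hs0.le (by ring)
      have heq : (1 - s) • a + s • b = a + s • (b - a) := by module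
      rw [heq] at h3
      simpa [hg] using h3
    have hg0 : g 0 = f a := by simp [hg]
    have : (g s - g 0) / s ≤ f b - f a := by
      rw [div_le_iff₀ hs0, hg0]
      nlinarith
    simpa [slope, div_eq_inv_mul, hs0.ne'] using this
  have htend : Tendsto (slope g 0) (𝓝[>] 0) (𝓝 d) :=
    (hasDerivAt_iff_tendsto_slope.1 hderiv).mono_left
      (nhdsWithin_mono 0 (fun s hs => hs.ne'))
  exact le_of_tendsto htend hslope

lemma proj_dist_le {X : Set F} (hX : Convex ℝ X) {u p z : F} (hu : u ∈ X) (hz : z ∈ X)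
    (hmin : ∀ w ∈ X, ‖u - p‖ ≤ ‖w - p‖) : ‖u - z‖ ≤ ‖p - z‖ := by
  have hobs : 0 ≤ ⟪u - p, z - u⟫ := by
    have hstep : ∀ θ : ℝ, 0 < θ → θ ≤ 1 → 0 ≤ 2 * ⟪u - p, z - u⟫ + θ * ‖z - u‖ ^ 2 := by
      intro θ hθ0 hθ1
      have hmem : u + θ • (z - u) ∈ X := by
        have := hX hu hz (by linarith : (0:ℝ) ≤ 1 - θ) hθ0.le (by ring)
        have heq : (1 - θ) • u + θ • z = u + θ • (z - u) := by module
        rwa [heq] at this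
      have h1 := hmin _ hmem
      have h2 : ‖u + θ • (z - u) - p‖ ^ 2 = ‖u - p‖ ^ 2 + 2 * θ * ⟪u - p, z - u⟫
          + θ ^ 2 * ‖z - u‖ ^ 2 := by
        have heq : u + θ • (z - u) - p = (u - p) + θ • (z - u) := by abel
        rw [heq, norm_add_sq_real, real_inner_smul_right, norm_smul]
        simp [abs_of_pos hθ0]
        ring
      have h3 : ‖u - p‖ ^ 2 ≤ ‖u + θ • (z - u) - p‖ ^ 2 := by
        have := pow_le_pow_left₀ (norm_nonneg _) h1 2
        simpa using this
      rw [h2] at h3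
      nlinarith
    by_contra hneg
    push_neg at hneg
    set ε : ℝ := -(2 * ⟪u - p, z - u⟫) with hε
    have hε0 : 0 < ε := by simp [hε]; linarith
    set M : ℝ := ‖z - u‖ ^ 2 with hM
    have hM0 : 0 ≤ M := sq_nonneg _
    set θ : ℝ := min 1 (ε / (2 * (M + 1))) with hθ
    have hθ0 : 0 < θ := lt_min zero_lt_one (by positivity)
    have hθ1 : θ ≤ 1 := min_le_left _ _
    have h5 := hstep θ hθ0 hθ1
    have h6 : θ * M ≤ ε / 2 := by
      have h7 : θ ≤ ε / (2 * (M + 1)) := min_le_right _ _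
      have h8 : θ * M ≤ (ε / (2 * (M + 1))) * M := mul_le_mul_of_nonneg_right h7 hM0
      have h9 : (ε / (2 * (M + 1))) * M ≤ ε / 2 := by
        rw [div_mul_eq_mul_div, div_le_div_iff₀ (by positivity) (by norm_num)]
        nlinarith
      linarith
    have : 2 * ⟪u - p, z - u⟫ = -ε := by simp [hε]
    linarith
  have hsq : ‖u - z‖ ^ 2 ≤ ‖p - z‖ ^ 2 := by
    have heq : p - z = (p - u) - (z - u) := by abel
    have heq2 : u - z = -(z - u) := by abel
    have hexpand : ‖(p - u) - (z - u)‖ ^ 2 = ‖p - u‖ ^ 2 - 2 * ⟪p - u, z - u⟫ + ‖z - u‖ ^ 2 :=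
      norm_sub_sq_real _ _
    rw [heq2, norm_neg, heq, hexpand]
    have hflip : ⟪p - u, z - u⟫ = - ⟪u - p, z - u⟫ := by
      rw [← inner_neg_left]; congr 1; abel
    nlinarith [sq_nonneg ‖p - u‖]
  exact le_of_pow_le_pow_left₀ two_ne_zero (norm_nonneg _) hsq

lemma step_bound {w v vs : F} {α μ Lf D ℓ0 : ℝ} (hα : 0 ≤ α) (hLf : 0 ≤ Lf)
    (hmono : μ * ‖w‖ ^ 2 ≤ ⟪v - vs, w⟫) (hlip : ‖v - vs‖ ≤ Lf * ‖w‖)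
    (hwD : ‖w‖ ≤ D) (hvs : ‖vs‖ ≤ ℓ0) :
    ‖w - α • v‖ ^ 2 ≤ (1 - 2 * α * μ + 2 * α ^ 2 * Lf ^ 2) * ‖w‖ ^ 2
      + (2 * α * D + 2 * α ^ 2 * ℓ0) * ‖vs‖ := by
  have hexp : ‖w - α • v‖ ^ 2 = ‖w‖ ^ 2 - 2 * α * ⟪v, w⟫ + α ^ 2 * ‖v‖ ^ 2 := by
    rw [norm_sub_sq_real, real_inner_smul_right, norm_smul, Real.norm_eq_abs,
      abs_of_nonneg hα, real_inner_comm]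
    ring
  have hv : ‖v‖ ≤ Lf * ‖w‖ + ‖vs‖ := by
    have h0 : v = (v - vs) + vs := by abel
    calc ‖v‖ = ‖(v - vs) + vs‖ := by rw [← h0]
      _ ≤ ‖v - vs‖ + ‖vs‖ := norm_add_le _ _
      _ ≤ Lf * ‖w‖ + ‖vs‖ := by linarith
  have hv2 : ‖v‖ ^ 2 ≤ 2 * Lf ^ 2 * ‖w‖ ^ 2 + 2 * ‖vs‖ ^ 2 := by
    nlinarith [norm_nonneg v, sq_nonneg (Lf * ‖w‖ - ‖vs‖), norm_nonneg w, norm_nonneg vs,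
      mul_nonneg hLf (norm_nonneg w)]
  have hinn : ⟪vs, w⟫ + μ * ‖w‖ ^ 2 ≤ ⟪v, w⟫ := by
    have e : ⟪v - vs, w⟫ = ⟪v, w⟫ - ⟪vs, w⟫ := inner_sub_left v vs w
    linarith [hmono]
  have hcs : -⟪vs, w⟫ ≤ ‖vs‖ * ‖w‖ := by
    have h1 := abs_real_inner_le_norm vs w
    have h2 := neg_abs_le ⟪vs, w⟫
    linarith
  have t1 : 2 * α * (⟪vs, w⟫ + μ * ‖w‖ ^ 2) ≤ 2 * α * ⟪v, w⟫ :=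
    mul_le_mul_of_nonneg_left hinn (by linarith)
  have t2 : α ^ 2 * ‖v‖ ^ 2 ≤ α ^ 2 * (2 * Lf ^ 2 * ‖w‖ ^ 2 + 2 * ‖vs‖ ^ 2) :=
    mul_le_mul_of_nonneg_left hv2 (sq_nonneg α)
  have t3 : ‖vs‖ * ‖w‖ ≤ ‖vs‖ * D := mul_le_mul_of_nonneg_left hwD (norm_nonneg vs)
  have t4 : ‖vs‖ ^ 2 ≤ ℓ0 * ‖vs‖ := by nlinarith [norm_nonneg vs]
  have t5 : α * (-⟪vs, w⟫) ≤ α * (‖vs‖ * ‖w‖) := mul_le_mul_of_nonneg_left hcs hα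
  have t6 : α * (‖vs‖ * ‖w‖) ≤ α * (‖vs‖ * D) := mul_le_mul_of_nonneg_left t3 hα
  have t7 : α ^ 2 * ‖vs‖ ^ 2 ≤ α ^ 2 * (ℓ0 * ‖vs‖) := mul_le_mul_of_nonneg_left t4 (sq_nonneg α)
  rw [hexp]
  nlinarith [t1, t2, t5, t6, t7]

variable [CompleteSpace F]

lemma strong_grad_ineq {X : Set F} {φ : F → ℝ} {μ : ℝ} {G a b : F}
    (hsc : ConvexOn ℝ X (fun z => φ z - μ / 2 * ‖z‖ ^ 2))
    (hd : HasGradientAt φ G a) (ha : a ∈ X) (hb : b ∈ X) :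
    ⟪G, b - a⟫ + μ / 2 * ‖b - a‖ ^ 2 ≤ φ b - φ a := by
  set w := b - a with hw
  have h1 : HasDerivAt (fun s : ℝ => a + s • w) w 0 := by
    simpa using ((hasDerivAt_id (0:ℝ)).smul_const w).const_add a
  have hd' : HasFDerivAt φ ((InnerProductSpace.toDual ℝ F) G) (a + (0:ℝ) • w) := by
    simpa using hd.hasFDerivAt
  have hφ : HasDerivAt (fun s : ℝ => φ (a + s • w)) ⟪G, w⟫ 0 := by
    have := hd'.comp_hasDerivAt 0 h1
    simp at this
    exact this
  have hinn : HasDerivAt (fun s : ℝ => ⟪a + s • w, a + s • w⟫) (2 * ⟪a, w⟫) 0 := by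
    have := (h1.inner ℝ h1)
    simpa [real_inner_comm, two_mul] using this
  have hn : HasDerivAt (fun s : ℝ => ‖a + s • w‖ ^ 2) (2 * ⟪a, w⟫) 0 := by
    have e : (fun s : ℝ => ‖a + s • w‖ ^ 2) = fun s : ℝ => ⟪a + s • w, a + s • w⟫ := by
      funext s; rw [real_inner_self_eq_norm_sq]
    rw [e]; exact hinn
  have hcomb : HasDerivAt (fun s : ℝ => φ (a + s • w) - μ / 2 * ‖a + s • w‖ ^ 2)
      (⟪G, w⟫ - μ / 2 * (2 * ⟪a, w⟫)) 0 := hφ.sub (hn.const_mul (μ / 2))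
  have key := convexOn_dirDeriv_le hsc ha hb hcomb
  have hexp : ‖b - a‖ ^ 2 = ‖b‖ ^ 2 - 2 * ⟪a, b⟫ + ‖a‖ ^ 2 := by
    rw [norm_sub_sq_real, real_inner_comm]
  have hinn2 : ⟪a, w⟫ = ⟪a, b⟫ - ⟪a, a⟫ := by rw [hw, inner_sub_right]
  rw [real_inner_self_eq_norm_sq] at hinn2
  have h4 : μ / 2 * ‖b - a‖ ^ 2 = μ / 2 * ‖b‖ ^ 2 - μ * ⟪a, b⟫ + μ / 2 * ‖a‖ ^ 2 := by
    rw [hexp]; ring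
  have h5 : μ / 2 * (2 * ⟪a, w⟫) = μ * ⟪a, b⟫ - μ * ‖a‖ ^ 2 := by rw [hinn2]; ring
  rw [hw] at h5
  linarith [key, h4, h5]

lemma strong_mono {X : Set F} {φ : F → ℝ} {μ : ℝ} {Ga Gb a b : F}
    (hsc : ConvexOn ℝ X (fun z => φ z - μ / 2 * ‖z‖ ^ 2))
    (hda : HasGradientAt φ Ga a) (hdb : HasGradientAt φ Gb b)
    (ha : a ∈ X) (hb : b ∈ X) :
    μ * ‖a - b‖ ^ 2 ≤ ⟪Ga - Gb, a - b⟫ := by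
  have h1 := strong_grad_ineq hsc hda ha hb
  have h2 := strong_grad_ineq hsc hdb hb ha
  have e1 : ⟪Ga - Gb, a - b⟫ = -⟪Ga, b - a⟫ - ⟪Gb, a - b⟫ := by
    have ea : ⟪Ga, b - a⟫ = ⟪Ga, b⟫ - ⟪Ga, a⟫ := inner_sub_right _ _ _
    have eb : ⟪Gb, a - b⟫ = ⟪Gb, a⟫ - ⟪Gb, b⟫ := inner_sub_right _ _ _
    have ec : ⟪Ga - Gb, a - b⟫ = ⟪Ga, a⟫ - ⟪Ga, b⟫ - ⟪Gb, a⟫ + ⟪Gb, b⟫ := by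
      simp [inner_sub_left, inner_sub_right]; ring
    rw [ea, eb, ec]; ring
  have e2 : ‖b - a‖ = ‖a - b‖ := norm_sub_rev _ _
  rw [e2] at h1
  linarith [h1, h2, e1.le, e1.ge]

lemma regret_step {X : Set F} {φ : F → ℝ} {μ Lf D : ℝ} {Gx Gs xx xs : F}
    (hsc : ConvexOn ℝ X (fun z => φ z - μ / 2 * ‖z‖ ^ 2))
    (hdx : HasGradientAt φ Gx xx) (hx : xx ∈ X) (hxs : xs ∈ X)
    (hμ : 0 ≤ μ)
    (hlip : ‖Gx - Gs‖ ≤ Lf * ‖xx - xs‖) (hD : ‖xx - xs‖ ≤ D) :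
    φ xx - φ xs ≤ D * ‖Gs‖ + Lf * ‖xx - xs‖ ^ 2 := by
  have h1 := strong_grad_ineq hsc hdx hx hxs
  have hsplit : ⟪Gx, xs - xx⟫ = ⟪Gs, xs - xx⟫ + ⟪Gx - Gs, xs - xx⟫ := by
    rw [inner_sub_left]; ring
  have hc1 : -⟪Gs, xs - xx⟫ ≤ ‖Gs‖ * ‖xs - xx‖ := by
    have := abs_real_inner_le_norm Gs (xs - xx)
    linarith [neg_abs_le ⟪Gs, xs - xx⟫]
  have hc2 : -⟪Gx - Gs, xs - xx⟫ ≤ ‖Gx - Gs‖ * ‖xs - xx‖ := by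
    have := abs_real_inner_le_norm (Gx - Gs) (xs - xx)
    linarith [neg_abs_le ⟪Gx - Gs, xs - xx⟫]
  have hrev : ‖xs - xx‖ = ‖xx - xs‖ := norm_sub_rev _ _
  rw [hrev] at hc1 hc2
  have hb1 : ‖Gs‖ * ‖xx - xs‖ ≤ ‖Gs‖ * D := mul_le_mul_of_nonneg_left hD (norm_nonneg Gs)
  have hb2 : ‖Gx - Gs‖ * ‖xx - xs‖ ≤ (Lf * ‖xx - xs‖) * ‖xx - xs‖ :=
    mul_le_mul_of_nonneg_right hlip (norm_nonneg _)
  nlinarith [h1, mul_nonneg hμ (sq_nonneg ‖xs - xx‖), norm_sub_rev xs xx,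
    sq_nonneg ‖xs - xx‖, mul_nonneg hμ (sq_nonneg ‖xx - xs‖)]

end Helpers

set_option maxHeartbeats 2000000 in
/-- Dynamic regret bound for the online alternating (projected) gradient method with
strongly convex outer losses: `BD-Regret_T = O(1 + P_{2,T} + Σ‖∇φ_t(x*_t)‖ + Y_{2,T})`. -/
theorem strongly_convex_dynamic_regret
    (μf Lf Ly Mf ℓ0 D E0 c α ρ : ℝ)
    (hμf : 0 < μf) (hLf : 0 < Lf) (hLy : 0 < Ly) (hMf : 0 < Mf)
    (hℓ0 : 0 < ℓ0) (hD : 0 < D) (hE0 : 0 < E0)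
    (hc : 0 < c) (hcle : c ≤ μf ^ 2 / (8 * (Lf ^ 2 + Ly ^ 2)))
    (hα : α = 4 * c / μf)
    (hρ0 : 0 ≤ ρ) (hρ : ρ ^ 2 ≤ 1 / (12 * Mf ^ 2 * (1 + 1 / c) + 2)) :
    ∃ C > 0, ∀ (d1 d2 T : ℕ), 1 ≤ T →
      ∀ (X : Set (EuclideanSpace ℝ (Fin d1))), X.Nonempty → IsClosed X → Convex ℝ X →
      (∀ a ∈ X, ∀ b ∈ X, ‖a - b‖ ≤ D) →
      ∀ (φ : ℕ → EuclideanSpace ℝ (Fin d1) → ℝ)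
        (xstar x : ℕ → EuclideanSpace ℝ (Fin d1))
        (ystar : ℕ → EuclideanSpace ℝ (Fin d1) → EuclideanSpace ℝ (Fin d2))
        (y : ℕ → EuclideanSpace ℝ (Fin d2))
        (g : ℕ → EuclideanSpace ℝ (Fin d1)),
      (∀ t ∈ Finset.Icc 1 T, Differentiable ℝ (φ t)) →
      -- μf-strong convexity of φ_t on X
      (∀ t ∈ Finset.Icc 1 T, ConvexOn ℝ X (fun z => φ t z - μf / 2 * ‖z‖ ^ 2)) →
      -- Lf-Lipschitz gradient on X
      (∀ t ∈ Finset.Icc 1 T, ∀ a ∈ X, ∀ b ∈ X,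
        ‖gradient (φ t) a - gradient (φ t) b‖ ≤ Lf * ‖a - b‖) →
      -- bounded gradient on X
      (∀ t ∈ Finset.Icc 1 T, ∀ a ∈ X, ‖gradient (φ t) a‖ ≤ ℓ0) →
      -- x*_t minimizes φ_t over X
      (∀ t ∈ Finset.Icc 1 T, xstar t ∈ X ∧ ∀ z ∈ X, φ t (xstar t) ≤ φ t z) →
      -- y*_t is Ly-Lipschitz
      (∀ t ∈ Finset.Icc 1 T, ∀ a b, ‖ystar t a - ystar t b‖ ≤ Ly * ‖a - b‖) →
      x 1 ∈ X →
      ‖y 1 - ystar 1 (x 1)‖ ≤ E0 →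
      -- inner contraction
      (∀ t ∈ Finset.Icc 1 T, ‖y (t + 1) - ystar t (x t)‖ ≤ ρ * ‖y t - ystar t (x t)‖) →
      -- approximate hypergradient and projected update
      (∀ t ∈ Finset.Icc 1 T,
        ‖g t - gradient (φ t) (x t)‖ ≤ Mf * ‖y (t + 1) - ystar t (x t)‖ ∧
        x (t + 1) ∈ X ∧
        ∀ z ∈ X, ‖x (t + 1) - (x t - α • g t)‖ ≤ ‖z - (x t - α • g t)‖) →
      ∑ t ∈ Finset.Icc 1 T, (φ t (x t) - φ t (xstar t))
        ≤ C * (1 + (∑ t ∈ Finset.Icc 2 T, ‖xstar (t - 1) - xstar t‖ ^ 2)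
            + (∑ t ∈ Finset.Icc 1 T, ‖gradient (φ t) (xstar t)‖)
            + ∑ t ∈ Finset.Icc 2 T,
                ‖ystar (t - 1) (xstar (t - 1)) - ystar t (xstar t)‖ ^ 2) := by
  subst hα
  obtain ⟨h2r, hcrux⟩ := crux_ineq hμf hLf hLy hMf hc hcle hρ0 hρ
  set ℓv : ℝ := 8 * c * Ly ^ 2 / μf ^ 2 with hℓv
  set η : ℝ := c * (1 + ℓv) with hηdef
  have hη0 : 0 < η := by rw [hηdef, hℓv]; positivity
  set lam : ℝ := (1 + η) ^ 2 * (1 - 4 * c * (1 + ℓv)) with hlamdef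
  set κ : ℝ := (1 + η) * (1 + 1 / η) * (4 * c / μf) ^ 2 * Mf ^ 2 * ρ ^ 2 with hκdef
  -- hcrux : 12 * κ * Ly ^ 2 < (1 - lam) * (1 - 2 * ρ ^ 2)
  have h1r : (0:ℝ) < 1 - 2 * ρ ^ 2 := by linarith
  have hκ0 : (0:ℝ) ≤ κ := by rw [hκdef]; positivity
  set ν : ℝ := κ / (1 - 2 * ρ ^ 2) with hνdef
  have hν0 : (0:ℝ) ≤ ν := by rw [hνdef]; exact div_nonneg hκ0 h1r.le
  set θ : ℝ := 1 - lam - 12 * ν * Ly ^ 2 with hθdef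
  have hθ0 : (0:ℝ) < θ := by
    have e : 12 * ν * Ly ^ 2 = 12 * κ * Ly ^ 2 / (1 - 2 * ρ ^ 2) := by rw [hνdef]; ring
    have h' : 12 * κ * Ly ^ 2 / (1 - 2 * ρ ^ 2) < 1 - lam := by
      rw [div_lt_iff₀ h1r]; exact hcrux
    rw [hθdef, e]; linarith
  set B : ℝ := 2 * (4 * c / μf) * D + 2 * (4 * c / μf) ^ 2 * ℓ0 with hBdef
  have hB0 : (0:ℝ) ≤ B := by rw [hBdef]; positivity
  set K1 : ℝ := (1 + η) ^ 2 * B with hK1def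
  have hK10 : (0:ℝ) ≤ K1 := by rw [hK1def]; positivity
  set K3 : ℝ := 1 + 1 / η with hK3def
  have hK30 : (0:ℝ) ≤ K3 := by rw [hK3def]; positivity
  set c0 : ℝ := (1 + |lam|) * D ^ 2 + ν * E0 ^ 2 with hc0def
  have hc00 : (0:ℝ) ≤ c0 := by
    rw [hc0def]
    have := abs_nonneg lam
    nlinarith [sq_nonneg D, sq_nonneg E0, mul_nonneg hν0 (sq_nonneg E0)]
  have hLfθ : (0:ℝ) ≤ Lf / θ := (div_pos hLf hθ0).le
  refine ⟨D + Lf / θ * (c0 + K1 + K3 + 6 * ν) + 1, ?_, ?_⟩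
  · have h1 : (0:ℝ) ≤ Lf / θ * (c0 + K1 + K3 + 6 * ν) :=
      mul_nonneg hLfθ (by linarith)
    linarith
  intro d1 d2 T hT X hXne hXcl hXconv hXdiam φ xstar x ystar y g hdiff hsc hlip hgb hxs hylip
    hx1 hy1 hcontr hupd
  have hmem : ∀ {t : ℕ}, 1 ≤ t → t ≤ T → t ∈ Finset.Icc 1 T :=
    fun h1 h2 => Finset.mem_Icc.2 ⟨h1, h2⟩
  have hxmem : ∀ t, 1 ≤ t → t ≤ T → x t ∈ X := by
    intro t h1 h2
    match t, h1 with
    | 1, _ => exact hx1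
    | (n+2), _ =>
      exact (hupd (n+1) (hmem (by omega) (by omega))).2.1
  -- named sums
  set G : ℝ := ∑ t ∈ Finset.Icc 1 T, ‖gradient (φ t) (xstar t)‖ with hGdef
  set P : ℝ := ∑ t ∈ Finset.Icc 2 T, ‖xstar (t - 1) - xstar t‖ ^ 2 with hPdef
  set Q : ℝ := ∑ t ∈ Finset.Icc 2 T, ‖ystar (t - 1) (xstar (t - 1)) - ystar t (xstar t)‖ ^ 2
    with hQdef
  set A : ℝ := ∑ t ∈ Finset.Icc 1 T, ‖x t - xstar t‖ ^ 2 with hAdef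
  set Δ : ℝ := ∑ t ∈ Finset.Icc 1 T, ‖y t - ystar t (x t)‖ ^ 2 with hΔdef
  have hG0 : (0:ℝ) ≤ G := by
    rw [hGdef]; exact Finset.sum_nonneg fun i _ => norm_nonneg _
  have hP0 : (0:ℝ) ≤ P := by
    rw [hPdef]; exact Finset.sum_nonneg fun i _ => sq_nonneg _
  have hQ0 : (0:ℝ) ≤ Q := by
    rw [hQdef]; exact Finset.sum_nonneg fun i _ => sq_nonneg _
  have hA0 : (0:ℝ) ≤ A := by
    rw [hAdef]; exact Finset.sum_nonneg fun i _ => sq_nonneg _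
  have hΔ0 : (0:ℝ) ≤ Δ := by
    rw [hΔdef]; exact Finset.sum_nonneg fun i _ => sq_nonneg _
  have hPshift : ∑ t ∈ Finset.Icc 1 (T - 1), ‖xstar t - xstar (t + 1)‖ ^ 2 = P := by
    rw [hPdef, sum_shift (fun t => ‖xstar (t - 1) - xstar t‖ ^ 2) T hT]
    exact (Finset.sum_congr rfl fun t _ => by simp).symm
  have hQshift : ∑ t ∈ Finset.Icc 1 (T - 1),
      ‖ystar t (xstar t) - ystar (t + 1) (xstar (t + 1))‖ ^ 2 = Q := by
    rw [hQdef, sum_shift (fun t => ‖ystar (t - 1) (xstar (t - 1)) - ystar t (xstar t)‖ ^ 2) T hT]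
    exact (Finset.sum_congr rfl fun t _ => by simp).symm
  have hsub1 : Finset.Icc 1 (T - 1) ⊆ Finset.Icc 1 T := by
    intro i hi; simp only [Finset.mem_Icc] at *; omega
  have hsub2 : Finset.Icc 2 T ⊆ Finset.Icc 1 T := by
    intro i hi; simp only [Finset.mem_Icc] at *; omega
  -- per-step x inequality
  have hstepx : ∀ t ∈ Finset.Icc 1 (T - 1),
      ‖x (t + 1) - xstar (t + 1)‖ ^ 2 ≤ lam * ‖x t - xstar t‖ ^ 2
        + K1 * ‖gradient (φ t) (xstar t)‖ + κ * ‖y t - ystar t (x t)‖ ^ 2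
        + K3 * ‖xstar t - xstar (t + 1)‖ ^ 2 := by
    intro t htm
    obtain ⟨ht1', ht2'⟩ := Finset.mem_Icc.1 htm
    have ht1 : t ∈ Finset.Icc 1 T := hmem ht1' (by omega)
    have ht2 : t + 1 ∈ Finset.Icc 1 T := hmem (by omega) (by omega)
    have hxt : x t ∈ X := hxmem t ht1' (by omega)
    have hxt1 : x (t + 1) ∈ X := (hupd t ht1).2.1
    have hxst : xstar t ∈ X := (hxs t ht1).1
    have hxst1 : xstar (t + 1) ∈ X := (hxs (t + 1) ht2).1
    have hgx : HasGradientAt (φ t) (gradient (φ t) (x t)) (x t) :=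
      ((hdiff t ht1) (x t)).hasGradientAt
    have hgs : HasGradientAt (φ t) (gradient (φ t) (xstar t)) (xstar t) :=
      ((hdiff t ht1) (xstar t)).hasGradientAt
    have hmono := strong_mono (hsc t ht1) hgx hgs hxt hxst
    have hlip' := hlip t ht1 (x t) hxt (xstar t) hxst
    have hwD := hXdiam (x t) hxt (xstar t) hxst
    have hvs := hgb t ht1 (xstar t) hxst
    have hα0 : (0:ℝ) ≤ 4 * c / μf := by positivity
    have hsb := step_bound (α := 4 * c / μf) hα0 hLf.le hmono hlip' hwD hvs
    have hco := coeff_le hμf hc hLf hLy hcle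
    rw [← hℓv] at hco
    have hs1 : ‖(x t - xstar t) - (4 * c / μf) • gradient (φ t) (x t)‖ ^ 2
        ≤ (1 - 4 * c * (1 + ℓv)) * ‖x t - xstar t‖ ^ 2
          + B * ‖gradient (φ t) (xstar t)‖ := by
      have hmul := mul_le_mul_of_nonneg_right hco (sq_nonneg ‖x t - xstar t‖)
      rw [hBdef]
      linarith only [hsb, hmul]
    -- error bound on the hypergradient
    have hgerr : ‖g t - gradient (φ t) (x t)‖ ≤ Mf * (ρ * ‖y t - ystar t (x t)‖) := by
      have h1 := (hupd t ht1).1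
      have h2 := hcontr t ht1
      calc ‖g t - gradient (φ t) (x t)‖ ≤ Mf * ‖y (t + 1) - ystar t (x t)‖ := h1
        _ ≤ Mf * (ρ * ‖y t - ystar t (x t)‖) := mul_le_mul_of_nonneg_left h2 hMf.le
    -- triangle for the inexact gradient step
    have htri : ‖(x t - (4 * c / μf) • g t) - xstar t‖
        ≤ ‖(x t - xstar t) - (4 * c / μf) • gradient (φ t) (x t)‖
          + (4 * c / μf) * (Mf * (ρ * ‖y t - ystar t (x t)‖)) := by
      have heq : (x t - (4 * c / μf) • g t) - xstar t
          = ((x t - xstar t) - (4 * c / μf) • gradient (φ t) (x t))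
            + (4 * c / μf) • (gradient (φ t) (x t) - g t) := by
        module
      rw [heq]
      have hn : ‖(4 * c / μf) • (gradient (φ t) (x t) - g t)‖
          ≤ (4 * c / μf) * (Mf * (ρ * ‖y t - ystar t (x t)‖)) := by
        rw [norm_smul, Real.norm_eq_abs, abs_of_nonneg hα0]
        have : ‖gradient (φ t) (x t) - g t‖ = ‖g t - gradient (φ t) (x t)‖ := norm_sub_rev _ _
        rw [this]
        exact mul_le_mul_of_nonneg_left hgerr hα0
      linarith [norm_add_le ((x t - xstar t) - (4 * c / μf) • gradient (φ t) (x t))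
        ((4 * c / μf) • (gradient (φ t) (x t) - g t))]
    -- projection
    have hproj : ‖x (t + 1) - xstar t‖ ≤ ‖(x t - (4 * c / μf) • g t) - xstar t‖ :=
      proj_dist_le hXconv hxt1 hxst (hupd t ht1).2.2
    -- triangle to next comparator
    have htri2 : ‖x (t + 1) - xstar (t + 1)‖
        ≤ ‖x (t + 1) - xstar t‖ + ‖xstar t - xstar (t + 1)‖ := by
      have heq : x (t + 1) - xstar (t + 1)
          = (x (t + 1) - xstar t) + (xstar t - xstar (t + 1)) := by abel
      rw [heq]
      exact norm_add_le _ _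
    have hchain : ‖x (t + 1) - xstar t‖
        ≤ ‖(x t - xstar t) - (4 * c / μf) • gradient (φ t) (x t)‖
          + (4 * c / μf) * (Mf * (ρ * ‖y t - ystar t (x t)‖)) :=
      le_trans hproj htri
    have hxss := x_step_scalar (e := (4 * c / μf) * (Mf * (ρ * ‖y t - ystar t (x t)‖)))
      (p := ‖xstar t - xstar (t + 1)‖) hη0 (norm_nonneg _) (norm_nonneg _) hs1 hchain htri2
    have eκ : (1 + η) * (1 + 1 / η)
        * ((4 * c / μf) * (Mf * (ρ * ‖y t - ystar t (x t)‖))) ^ 2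
        = κ * ‖y t - ystar t (x t)‖ ^ 2 := by
      rw [hκdef]; ring
    have elam : (1 + η) ^ 2 * (1 - 4 * c * (1 + ℓv)) * ‖x t - xstar t‖ ^ 2
        = lam * ‖x t - xstar t‖ ^ 2 := by rw [hlamdef]
    have eK1 : (1 + η) ^ 2 * (B * ‖gradient (φ t) (xstar t)‖)
        = K1 * ‖gradient (φ t) (xstar t)‖ := by rw [hK1def]; ring
    have eK3 : (1 + 1 / η) * ‖xstar t - xstar (t + 1)‖ ^ 2
        = K3 * ‖xstar t - xstar (t + 1)‖ ^ 2 := by rw [hK3def]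
    rw [eκ, elam, eK1, eK3] at hxss
    exact hxss
  -- per-step δ inequality
  have hstepd : ∀ t ∈ Finset.Icc 1 (T - 1),
      ‖y (t + 1) - ystar (t + 1) (x (t + 1))‖ ^ 2
        ≤ 2 * ρ ^ 2 * ‖y t - ystar t (x t)‖ ^ 2 + 6 * Ly ^ 2 * ‖x t - xstar t‖ ^ 2
          + 6 * Ly ^ 2 * ‖x (t + 1) - xstar (t + 1)‖ ^ 2
          + 6 * ‖ystar t (xstar t) - ystar (t + 1) (xstar (t + 1))‖ ^ 2 := by
    intro t htm
    obtain ⟨ht1', ht2'⟩ := Finset.mem_Icc.1 htm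
    have ht1 : t ∈ Finset.Icc 1 T := hmem ht1' (by omega)
    have ht2 : t + 1 ∈ Finset.Icc 1 T := hmem (by omega) (by omega)
    have hxt : x t ∈ X := hxmem t ht1' (by omega)
    have hxt1 : x (t + 1) ∈ X := (hupd t ht1).2.1
    have hxst : xstar t ∈ X := (hxs t ht1).1
    have heq : y (t + 1) - ystar (t + 1) (x (t + 1))
        = (y (t + 1) - ystar t (x t)) + (ystar t (x t) - ystar t (xstar t))
          + (ystar t (xstar t) - ystar (t + 1) (xstar (t + 1)))
          + (ystar (t + 1) (xstar (t + 1)) - ystar (t + 1) (x (t + 1))) := by abel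
    have htr : ‖y (t + 1) - ystar (t + 1) (x (t + 1))‖
        ≤ ‖y (t + 1) - ystar t (x t)‖ + ‖ystar t (x t) - ystar t (xstar t)‖
          + ‖ystar t (xstar t) - ystar (t + 1) (xstar (t + 1))‖
          + ‖ystar (t + 1) (xstar (t + 1)) - ystar (t + 1) (x (t + 1))‖ := by
      rw [heq]
      refine le_trans (norm_add_le _ _) ?_
      have h1 := norm_add_le ((y (t + 1) - ystar t (x t)) + (ystar t (x t) - ystar t (xstar t)))
        (ystar t (xstar t) - ystar (t + 1) (xstar (t + 1)))
      have h2 := norm_add_le (y (t + 1) - ystar t (x t)) (ystar t (x t) - ystar t (xstar t))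
      linarith
    have hb1 : ‖y (t + 1) - ystar t (x t)‖ ≤ ρ * ‖y t - ystar t (x t)‖ := hcontr t ht1
    have hb2 : ‖ystar t (x t) - ystar t (xstar t)‖ ≤ Ly * ‖x t - xstar t‖ :=
      hylip t ht1 (x t) (xstar t)
    have hb4 : ‖ystar (t + 1) (xstar (t + 1)) - ystar (t + 1) (x (t + 1))‖
        ≤ Ly * ‖x (t + 1) - xstar (t + 1)‖ := by
      have := hylip (t + 1) ht2 (xstar (t + 1)) (x (t + 1))
      rwa [norm_sub_rev (xstar (t+1))] at this
    have hfin : ‖y (t + 1) - ystar (t + 1) (x (t + 1))‖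
        ≤ ρ * ‖y t - ystar t (x t)‖ + Ly * ‖x t - xstar t‖
          + Ly * ‖x (t + 1) - xstar (t + 1)‖
          + ‖ystar t (xstar t) - ystar (t + 1) (xstar (t + 1))‖ := by linarith
    exact delta_step hfin (norm_nonneg _)
  -- regret per-step
  have hreg : ∀ t ∈ Finset.Icc 1 T,
      φ t (x t) - φ t (xstar t) ≤ D * ‖gradient (φ t) (xstar t)‖
        + Lf * ‖x t - xstar t‖ ^ 2 := by
    intro t htm
    obtain ⟨ht1', ht2'⟩ := Finset.mem_Icc.1 htm
    have hxt : x t ∈ X := hxmem t ht1' ht2'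
    have hxst : xstar t ∈ X := (hxs t htm).1
    exact regret_step (hsc t htm) ((hdiff t htm) (x t)).hasGradientAt hxt hxst hμf.le
      (hlip t htm (x t) hxt (xstar t) hxst) (hXdiam (x t) hxt (xstar t) hxst)
  -- summed x inequality
  have hsum1 : A - ‖x 1 - xstar 1‖ ^ 2
      ≤ lam * A - lam * ‖x T - xstar T‖ ^ 2 + K1 * G + κ * Δ + K3 * P := by
    have hs := Finset.sum_le_sum hstepx
    have hL : ∑ t ∈ Finset.Icc 1 (T - 1), ‖x (t + 1) - xstar (t + 1)‖ ^ 2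
        = A - ‖x 1 - xstar 1‖ ^ 2 := by
      rw [← sum_shift (fun t => ‖x t - xstar t‖ ^ 2) T hT,
        sum_drop_first (fun t => ‖x t - xstar t‖ ^ 2) T hT, ← hAdef]
    have hR : ∑ t ∈ Finset.Icc 1 (T - 1), (lam * ‖x t - xstar t‖ ^ 2
        + K1 * ‖gradient (φ t) (xstar t)‖ + κ * ‖y t - ystar t (x t)‖ ^ 2
        + K3 * ‖xstar t - xstar (t + 1)‖ ^ 2)
        = lam * ∑ t ∈ Finset.Icc 1 (T - 1), ‖x t - xstar t‖ ^ 2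
          + K1 * ∑ t ∈ Finset.Icc 1 (T - 1), ‖gradient (φ t) (xstar t)‖
          + κ * ∑ t ∈ Finset.Icc 1 (T - 1), ‖y t - ystar t (x t)‖ ^ 2
          + K3 * ∑ t ∈ Finset.Icc 1 (T - 1), ‖xstar t - xstar (t + 1)‖ ^ 2 := by
      rw [Finset.sum_add_distrib, Finset.sum_add_distrib, Finset.sum_add_distrib,
        ← Finset.mul_sum, ← Finset.mul_sum, ← Finset.mul_sum, ← Finset.mul_sum]
    have e1 : ∑ t ∈ Finset.Icc 1 (T - 1), ‖x t - xstar t‖ ^ 2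
        = A - ‖x T - xstar T‖ ^ 2 := by
      rw [sum_drop_last (fun t => ‖x t - xstar t‖ ^ 2) T hT, ← hAdef]
    have e2 : ∑ t ∈ Finset.Icc 1 (T - 1), ‖gradient (φ t) (xstar t)‖ ≤ G := by
      rw [hGdef]
      exact Finset.sum_le_sum_of_subset_of_nonneg hsub1 fun i _ _ => norm_nonneg _
    have e3 : ∑ t ∈ Finset.Icc 1 (T - 1), ‖y t - ystar t (x t)‖ ^ 2 ≤ Δ := by
      rw [hΔdef]
      exact Finset.sum_le_sum_of_subset_of_nonneg hsub1 fun i _ _ => sq_nonneg _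
    rw [hL, hR, e1, hPshift] at hs
    have e2' := mul_le_mul_of_nonneg_left e2 hK10
    have e3' := mul_le_mul_of_nonneg_left e3 hκ0
    linarith only [hs, e2', e3']
  -- summed δ inequality
  have hsum2 : (1 - 2 * ρ ^ 2) * Δ ≤ E0 ^ 2 + 12 * Ly ^ 2 * A + 6 * Q := by
    have hs := Finset.sum_le_sum hstepd
    have hL : ∑ t ∈ Finset.Icc 1 (T - 1), ‖y (t + 1) - ystar (t + 1) (x (t + 1))‖ ^ 2
        = Δ - ‖y 1 - ystar 1 (x 1)‖ ^ 2 := by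
      rw [← sum_shift (fun t => ‖y t - ystar t (x t)‖ ^ 2) T hT,
        sum_drop_first (fun t => ‖y t - ystar t (x t)‖ ^ 2) T hT, ← hΔdef]
    have hR : ∑ t ∈ Finset.Icc 1 (T - 1), (2 * ρ ^ 2 * ‖y t - ystar t (x t)‖ ^ 2
        + 6 * Ly ^ 2 * ‖x t - xstar t‖ ^ 2 + 6 * Ly ^ 2 * ‖x (t + 1) - xstar (t + 1)‖ ^ 2
        + 6 * ‖ystar t (xstar t) - ystar (t + 1) (xstar (t + 1))‖ ^ 2)
        = 2 * ρ ^ 2 * ∑ t ∈ Finset.Icc 1 (T - 1), ‖y t - ystar t (x t)‖ ^ 2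
          + 6 * Ly ^ 2 * ∑ t ∈ Finset.Icc 1 (T - 1), ‖x t - xstar t‖ ^ 2
          + 6 * Ly ^ 2 * ∑ t ∈ Finset.Icc 1 (T - 1), ‖x (t + 1) - xstar (t + 1)‖ ^ 2
          + 6 * ∑ t ∈ Finset.Icc 1 (T - 1),
              ‖ystar t (xstar t) - ystar (t + 1) (xstar (t + 1))‖ ^ 2 := by
      rw [Finset.sum_add_distrib, Finset.sum_add_distrib, Finset.sum_add_distrib,
        ← Finset.mul_sum, ← Finset.mul_sum, ← Finset.mul_sum, ← Finset.mul_sum]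
    have e1 : ∑ t ∈ Finset.Icc 1 (T - 1), ‖y t - ystar t (x t)‖ ^ 2 ≤ Δ := by
      rw [hΔdef]
      exact Finset.sum_le_sum_of_subset_of_nonneg hsub1 fun i _ _ => sq_nonneg _
    have e2 : ∑ t ∈ Finset.Icc 1 (T - 1), ‖x t - xstar t‖ ^ 2 ≤ A := by
      rw [hAdef]
      exact Finset.sum_le_sum_of_subset_of_nonneg hsub1 fun i _ _ => sq_nonneg _
    have e3 : ∑ t ∈ Finset.Icc 1 (T - 1), ‖x (t + 1) - xstar (t + 1)‖ ^ 2 ≤ A := by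
      rw [← sum_shift (fun t => ‖x t - xstar t‖ ^ 2) T hT, hAdef]
      exact Finset.sum_le_sum_of_subset_of_nonneg hsub2 fun i _ _ => sq_nonneg _
    rw [hL, hR, hQshift] at hs
    have hy1' : ‖y 1 - ystar 1 (x 1)‖ ^ 2 ≤ E0 ^ 2 := sq_mono (norm_nonneg _) hy1
    have hr2 : (0:ℝ) ≤ 2 * ρ ^ 2 := by positivity
    have hL6 : (0:ℝ) ≤ 6 * Ly ^ 2 := by positivity
    linarith only [hs, mul_le_mul_of_nonneg_left e1 hr2, mul_le_mul_of_nonneg_left e2 hL6,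
      mul_le_mul_of_nonneg_left e3 hL6, hy1']
  -- diameter bounds
  have haD1 : ‖x 1 - xstar 1‖ ≤ D :=
    hXdiam (x 1) (hxmem 1 le_rfl hT) (xstar 1) (hxs 1 (hmem le_rfl hT)).1
  have haDT : ‖x T - xstar T‖ ≤ D :=
    hXdiam (x T) (hxmem T hT le_rfl) (xstar T) (hxs T (hmem hT le_rfl)).1
  -- combine
  have hfin1 : (1 - lam) * A ≤ (1 + |lam|) * D ^ 2 + K1 * G + κ * Δ + K3 * P := by
    have h1 : ‖x 1 - xstar 1‖ ^ 2 ≤ D ^ 2 := sq_mono (norm_nonneg _) haD1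
    have h2 : -lam * ‖x T - xstar T‖ ^ 2 ≤ |lam| * ‖x T - xstar T‖ ^ 2 :=
      mul_le_mul_of_nonneg_right (neg_le_abs lam) (sq_nonneg _)
    have h3 : |lam| * ‖x T - xstar T‖ ^ 2 ≤ |lam| * D ^ 2 :=
      mul_le_mul_of_nonneg_left (sq_mono (norm_nonneg _) haDT) (abs_nonneg lam)
    linarith only [hsum1, h1, h2, h3]
  have hfin3 : κ * Δ ≤ ν * (E0 ^ 2 + 12 * Ly ^ 2 * A + 6 * Q) := by
    have h2 := mul_le_mul_of_nonneg_left hsum2 hκ0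
    rw [hνdef, div_mul_eq_mul_div, le_div_iff₀ h1r]
    linarith only [h2]
  have hfin4 : θ * A ≤ c0 + K1 * G + K3 * P + 6 * ν * Q := by
    rw [hθdef, hc0def]
    linarith only [hfin1, hfin3]
  have hAbound : Lf * A ≤ Lf / θ * (c0 + K1 * G + K3 * P + 6 * ν * Q) := by
    rw [div_mul_eq_mul_div, le_div_iff₀ hθ0]
    linarith only [mul_le_mul_of_nonneg_left hfin4 hLf.le]
  have hregsum : ∑ t ∈ Finset.Icc 1 T, (φ t (x t) - φ t (xstar t)) ≤ D * G + Lf * A := by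
    have hs := Finset.sum_le_sum hreg
    have hR : ∑ t ∈ Finset.Icc 1 T, (D * ‖gradient (φ t) (xstar t)‖
        + Lf * ‖x t - xstar t‖ ^ 2) = D * G + Lf * A := by
      rw [Finset.sum_add_distrib, ← Finset.mul_sum, ← Finset.mul_sum, ← hGdef, ← hAdef]
    linarith only [hs, hR.le, hR.ge]
  -- final
  have hexp : Lf / θ * (c0 + K1 * G + K3 * P + 6 * ν * Q)
      = Lf / θ * c0 + (Lf / θ * K1) * G + (Lf / θ * K3) * P + (Lf / θ * (6 * ν)) * Q := by
    ring
  have hs0 : (0:ℝ) ≤ Lf / θ * c0 := mul_nonneg hLfθ hc00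
  have hs1 : (0:ℝ) ≤ Lf / θ * K1 := mul_nonneg hLfθ hK10
  have hs2 : (0:ℝ) ≤ Lf / θ * K3 := mul_nonneg hLfθ hK30
  have hs3 : (0:ℝ) ≤ Lf / θ * (6 * ν) := mul_nonneg hLfθ (by linarith)
  have hfinal : D * G + Lf * A
      ≤ (D + Lf / θ * (c0 + K1 + K3 + 6 * ν) + 1) * (1 + P + G + Q) := by
    rw [hexp] at hAbound
    have hg : (0:ℝ) ≤ (1 + Lf / θ * c0 + Lf / θ * K3 + Lf / θ * (6 * ν)) * G :=
      mul_nonneg (by linarith) hG0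
    have hp : (0:ℝ) ≤ (D + 1 + Lf / θ * c0 + Lf / θ * K1 + Lf / θ * (6 * ν)) * P :=
      mul_nonneg (by linarith) hP0
    have hq : (0:ℝ) ≤ (D + 1 + Lf / θ * c0 + Lf / θ * K1 + Lf / θ * K3) * Q :=
      mul_nonneg (by linarith) hQ0
    linarith only [hAbound, hg, hp, hq, hD.le, hs0, hs1, hs2, hs3, hG0, hP0, hQ0]
  linarith only [hregsum, hfinal]
end

section
/- Fix positive constants μ_f, L_f, L_y, M_f, ℓ_0, D, E_0 and c with 0 < c ≤ μ_f²/(8(L_f² + L_y²)); set α := 4c/μ_f, and let ρ ≥ 0 satisfy ρ² ≤ 1/(12·M_f²·(1 + 1/c) + 2). Then there exists a constant C > 0, depending only on (μ_f, L_f, L_y, M_f, ℓ_0, D, c, E_0) and not on T, with the following property. Let X ⊆ ℝ^{d1} be nonempty, closed and convex with diameter at most D, let T ≥ 1, and for each t ∈ {1,…,T}: let φ_t : ℝ^{d1} → ℝ be nonnegative on all of ℝ^{d1}, differentiable, μ_f-strongly convex on X, with ∇φ_t L_f-Lipschitz on ℝ^{d1} and ‖∇φ_t(x)‖ ≤ ℓ_0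 for all x ∈ X; let x*_t ∈ argmin_{x ∈ X} φ_t(x); and let y*_t : ℝ^{d1} → ℝ^{d2} be L_y-Lipschitz. Suppose x_1 ∈ X, ‖y_1 − y*_1(x_1)‖ ≤ E_0, and for every t ∈ {1,…,T}: ‖y_{t+1} − y*_t(x_t)‖ ≤ ρ·‖y_t − y*_t(x_t)‖, and x_{t+1} = Π_X(x_t − α·g̃_t) for some g̃_t ∈ ℝ^{d1} with ‖g̃_t − ∇φ_t(x_t)‖ ≤ M_f·‖y_{t+1} − y*_t(x_t)‖. Then Σ_{t=1}^T (φ_t(x_t) − φ_t(x*_t)) ≤ C·( 1 + P_{2,T} + Σ_{t=1}^T √(φ_t(x*_t)) + Y_{2,T} ) (a small-loss bound: the gradient-norm term is replaced via the self-bounding property of nonnegative smooth functions). -/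
open Finset
open scoped InnerProductSpace

section aux
variable {F : Type*} [NormedAddCommGroup F] [InnerProductSpace ℝ F] [CompleteSpace F]

lemma obgd_inner_gradient (f : F → ℝ) (w v : F) : ⟪gradient f w, v⟫_ℝ = fderiv ℝ f w v := by
  rw [gradient]; exact InnerProductSpace.toDual_symm_apply

lemma obgd_conv_fderiv_ineq {X : Set F} {f : F → ℝ}
    (hf : Differentiable ℝ f) (hcv : ConvexOn ℝ X f) {x z : F} (hx : x ∈ X) (hz : z ∈ X) :
    f x + fderiv ℝ f x (z - x) ≤ f z := by
  set l : ℝ → F := fun s => x + s • (z - x) with hl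
  have hld : ∀ s : ℝ, HasDerivAt l (z - x) s := by
    intro s
    simpa [hl] using ((hasDerivAt_id s).smul_const (z - x)).const_add x
  have hl0 : l 0 = x := by simp [hl]
  have hg : HasDerivAt (fun s => f (l s)) (fderiv ℝ f x (z - x)) 0 := by
    have := (hf (l 0)).hasFDerivAt.comp_hasDerivAt 0 (hld 0)
    rwa [hl0] at this
  have hslope : ∀ s ∈ Set.Ioc (0:ℝ) 1, slope (fun s => f (l s)) 0 s ≤ f z - f x := by
    intro s hs
    have hls : l s = (1 - s) • x + s • z := by
      rw [hl]; simp only; rw [smul_sub, sub_smul, one_smul]; abel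
    have hcvs : f (l s) ≤ (1 - s) * f x + s * f z := by
      rw [hls]
      exact hcv.2 hx hz (by linarith [hs.2]) hs.1.le (by ring)
    rw [slope_def_field]
    rw [div_le_iff₀ (by linarith [hs.1] : (0:ℝ) < s - 0)]
    rw [hl0]
    nlinarith [hcvs]
  have htend : Filter.Tendsto (slope (fun s => f (l s)) 0) (nhdsWithin 0 (Set.Ioi (0:ℝ)))
      (nhds (fderiv ℝ f x (z - x))) := by
    have h1 := hasDerivAt_iff_tendsto_slope.1 hg
    exact h1.mono_left (nhdsWithin_mono 0 (fun s hs => ne_of_gt hs))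
  have hle : fderiv ℝ f x (z - x) ≤ f z - f x := by
    refine le_of_tendsto htend ?_
    filter_upwards [Ioc_mem_nhdsGT_of_mem ⟨le_rfl, zero_lt_one⟩] with s hs using hslope s hs
  linarith

lemma obgd_strong_ineq {X : Set F} {f : F → ℝ} {μ : ℝ}
    (hf : Differentiable ℝ f)
    (hcv : ConvexOn ℝ X (fun z => f z - μ / 2 * ‖z‖ ^ 2)) {x z : F} (hx : x ∈ X) (hz : z ∈ X) :
    f x + ⟪gradient f x, z - x⟫_ℝ + μ / 2 * ‖z - x‖ ^ 2 ≤ f z := by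
  have hq : Differentiable ℝ (fun w : F => ⟪w, w⟫_ℝ) :=
    differentiable_id.inner ℝ differentiable_id
  have heq : (fun z : F => f z - μ / 2 * ‖z‖ ^ 2) = fun w => f w - μ / 2 * ⟪w, w⟫_ℝ := by
    funext w; rw [real_inner_self_eq_norm_sq]
  rw [heq] at hcv
  have hh : Differentiable ℝ (fun w => f w - μ / 2 * ⟪w, w⟫_ℝ) := hf.sub (hq.const_mul _)
  have key := obgd_conv_fderiv_ineq hh hcv hx hz
  have hfd : fderiv ℝ (fun w => f w - μ / 2 * ⟪w, w⟫_ℝ) x (z - x)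
      = fderiv ℝ f x (z - x) - μ / 2 * (2 * ⟪x, z⟫_ℝ - 2 * ‖x‖ ^ 2) := by
    rw [fderiv_fun_sub (hf x) ((hq x).const_mul _)]
    simp only [ContinuousLinearMap.sub_apply]
    congr 1
    rw [fderiv_const_mul (hq x)]
    simp only [ContinuousLinearMap.smul_apply, smul_eq_mul]
    rw [fderiv_inner_apply ℝ differentiableAt_fun_id differentiableAt_fun_id]
    simp only [fderiv_fun_id]
    rw [show (ContinuousLinearMap.id ℝ F) (z - x) = z - x from rfl]
    rw [inner_sub_right, inner_sub_left, real_inner_comm z x, real_inner_self_eq_norm_sq]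
    ring
  rw [hfd] at key
  have e2 : ‖z - x‖ ^ 2 = ‖z‖ ^ 2 - 2 * ⟪z, x⟫_ℝ + ‖x‖ ^ 2 := norm_sub_sq_real z x
  rw [obgd_inner_gradient, e2]
  simp only [real_inner_self_eq_norm_sq] at key
  have hcomm : ⟪z, x⟫_ℝ = ⟪x, z⟫_ℝ := by rw [real_inner_comm]
  rw [hcomm]
  linarith [key]

lemma obgd_descent {f : F → ℝ} {L : ℝ} (hf : Differentiable ℝ f) (hL : 0 ≤ L)
    (hlip : ∀ a b, ‖gradient f a - gradient f b‖ ≤ L * ‖a - b‖) (x y : F) :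
    f y ≤ f x + ⟪gradient f x, y - x⟫_ℝ + L * ‖y - x‖ ^ 2 := by
  have hnn : ∀ a b : F, ‖fderiv ℝ f a - fderiv ℝ f b‖ = ‖gradient f a - gradient f b‖ := by
    intro a b
    have : gradient f a - gradient f b
        = (InnerProductSpace.toDual ℝ F).symm (fderiv ℝ f a - fderiv ℝ f b) := by
      rw [map_sub]; rfl
    rw [this, LinearIsometryEquiv.norm_map]
  have seg : Convex ℝ (segment ℝ x y) := convex_segment x y
  have hbound : ∀ w ∈ segment ℝ x y, ‖fderiv ℝ f w - fderiv ℝ f x‖ ≤ L * ‖y - x‖ := by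
    intro w hw
    obtain ⟨a, b, ha, hb, hab, rfl⟩ := hw
    have hwx : a • x + b • y - x = b • (y - x) := by
      rw [show a = 1 - b by linarith]; rw [smul_sub, sub_smul, one_smul]; abel
    rw [hnn]
    calc ‖gradient f (a • x + b • y) - gradient f x‖ ≤ L * ‖a • x + b • y - x‖ := hlip _ _
      _ = L * (b * ‖y - x‖) := by
          rw [hwx, norm_smul, Real.norm_eq_abs, abs_of_nonneg hb]
      _ ≤ L * ‖y - x‖ := by
          have hb1 : b ≤ 1 := by linarith
          nlinarith [mul_nonneg (mul_nonneg hL (norm_nonneg (y - x))) (by linarith : (0:ℝ) ≤ 1 - b)]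
  have key := seg.norm_image_sub_le_of_norm_hasFDerivWithin_le'
    (fun w _ => (hf w).hasFDerivAt.hasFDerivWithinAt) hbound
    (left_mem_segment ℝ x y) (right_mem_segment ℝ x y)
  have h1 : f y - f x - fderiv ℝ f x (y - x) ≤ L * ‖y - x‖ * ‖y - x‖ := by
    rw [Real.norm_eq_abs] at key
    calc f y - f x - fderiv ℝ f x (y - x) ≤ |f y - f x - fderiv ℝ f x (y - x)| := le_abs_self _
      _ ≤ _ := key
  rw [obgd_inner_gradient]
  nlinarith [h1, norm_nonneg (y - x)]

lemma obgd_selfbound {f : F → ℝ} {L : ℝ} (hf : Differentiable ℝ f) (hL : 0 < L)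
    (hlip : ∀ a b, ‖gradient f a - gradient f b‖ ≤ L * ‖a - b‖)
    (hpos : ∀ z, 0 ≤ f z) (z : F) : ‖gradient f z‖ ^ 2 ≤ 4 * L * f z := by
  set G := gradient f z with hG
  have key := obgd_descent hf hL.le hlip z (z - (1/(2*L)) • G)
  have e1 : z - (1/(2*L)) • G - z = -((1/(2*L)) • G) := by abel
  rw [e1] at key
  have e2 : ⟪G, -((1/(2*L)) • G)⟫_ℝ = -((1/(2*L)) * ‖G‖^2) := by
    rw [inner_neg_right, real_inner_smul_right, real_inner_self_eq_norm_sq]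
  have e3 : ‖-((1/(2*L)) • G)‖^2 = (1/(2*L))^2 * ‖G‖^2 := by
    rw [norm_neg, norm_smul, mul_pow, Real.norm_eq_abs, sq_abs]
  rw [e2, e3] at key
  have h0 := hpos (z - (1/(2*L)) • G)
  have e4 : L * ((1/(2*L))^2 * ‖G‖^2) = (1/(2*L)) * ‖G‖^2 - (1/(4*L)) * ‖G‖^2 := by
    field_simp; ring
  have h5 : (1/(4*L)) * ‖G‖^2 ≤ f z := by
    rw [e4] at key; linarith
  have e5 : 4*L*((1/(4*L)) * ‖G‖^2) = ‖G‖^2 := by field_simp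
  calc ‖G‖^2 = 4*L*((1/(4*L)) * ‖G‖^2) := e5.symm
    _ ≤ 4*L*f z := by
        apply mul_le_mul_of_nonneg_left h5 (by positivity)

lemma obgd_proj {X : Set F} (hX : Convex ℝ X) {v p z : F} (hv : v ∈ X) (hz : z ∈ X)
    (hmin : ∀ w ∈ X, ‖v - p‖ ≤ ‖w - p‖) :
    ‖v - z‖ ^ 2 + ‖p - v‖ ^ 2 ≤ ‖p - z‖ ^ 2 := by
  haveI : Nonempty X := ⟨⟨v, hv⟩⟩
  have hinf : ‖p - v‖ = ⨅ w : X, ‖p - w‖ := by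
    apply le_antisymm
    · exact le_ciInf fun w => by
        rw [norm_sub_rev p v, norm_sub_rev p w.1]; exact hmin w.1 w.2
    · have hbdd : BddBelow (Set.range fun w : X => ‖p - (w:F)‖) :=
        ⟨0, fun r hr => by obtain ⟨w, rfl⟩ := hr; exact norm_nonneg _⟩
      exact ciInf_le hbdd ⟨v, hv⟩
  have hobt := (norm_eq_iInf_iff_real_inner_le_zero hX hv).1 hinf z hz
  have hexp : ‖p - z‖ ^ 2 = ‖p - v‖ ^ 2 + 2 * ⟪p - v, v - z⟫_ℝ + ‖v - z‖ ^ 2 := by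
    rw [show p - z = (p - v) + (v - z) by abel, norm_add_sq_real]
  have hin : ⟪p - v, v - z⟫_ℝ = - ⟪p - v, z - v⟫_ℝ := by
    rw [show v - z = -(z - v) by abel, inner_neg_right]
  linarith

end aux

lemma obgd_sum_shift (T : ℕ) (hT : 1 ≤ T) (f : ℕ → ℝ) :
    ∑ t ∈ Finset.Icc 2 T, f t = ∑ t ∈ Finset.Icc 1 (T-1), f (t+1) := by
  have h : Finset.Icc 2 T = (Finset.Icc 1 (T-1)).map (addRightEmbedding 1) := by
    rw [Finset.map_add_right_Icc]
    congr 1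
    omega
  rw [h, Finset.sum_map]
  rfl

lemma obgd_sum_split (T : ℕ) (hT : 1 ≤ T) (f : ℕ → ℝ) :
    ∑ t ∈ Finset.Icc 1 T, f t = f 1 + ∑ t ∈ Finset.Icc 2 T, f t := by
  rw [Finset.Icc_eq_cons_Ioc hT, Finset.sum_cons, ← Finset.Icc_add_one_left_eq_Ioc]; rfl

lemma obgd_sqrt_add (a b : ℝ) (ha : 0 ≤ a) (hb : 0 ≤ b) :
    Real.sqrt (a + b) ≤ Real.sqrt a + Real.sqrt b := by
  have h : a + b ≤ (Real.sqrt a + Real.sqrt b)^2 := by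
    nlinarith [Real.sq_sqrt ha, Real.sq_sqrt hb, Real.sqrt_nonneg a, Real.sqrt_nonneg b]
  calc Real.sqrt (a+b) ≤ Real.sqrt ((Real.sqrt a + Real.sqrt b)^2) := Real.sqrt_le_sqrt h
    _ = Real.sqrt a + Real.sqrt b := Real.sqrt_sq (by positivity)

lemma obgd_sq2 {c x p q : ℝ} (hc : 0 < c) (hc18 : c ≤ 1/8) (hx : 0 ≤ x)
    (h : x ≤ p + q) (hp : 0 ≤ p) (hq : 0 ≤ q) :
    c*((1-2*c)*x^2) ≤ c*((1-c)*p^2) + q^2 := by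
  have h1 : x^2 ≤ (p+q)^2 := by nlinarith
  have h2 : (0:ℝ) ≤ c*(1-2*c) := by nlinarith
  nlinarith [mul_le_mul_of_nonneg_left h1 h2, sq_nonneg (c*p - (1-2*c)*q), sq_nonneg q]

lemma obgd_sq4 {x p q r s : ℝ} (hx : 0 ≤ x) (hp : 0 ≤ p) (hq : 0 ≤ q) (hr : 0 ≤ r)
    (hs : 0 ≤ s) (h : x ≤ p + q + r + s) :
    x^2 ≤ 2*p^2 + 6*q^2 + 6*r^2 + 6*s^2 := by
  nlinarith [sq_nonneg (p - q - r - s), sq_nonneg (q-r), sq_nonneg (q-s), sq_nonneg (r-s),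
    mul_self_le_mul_self hx h, sq_nonneg x, sq_nonneg (p+q+r+s)]

lemma obgd_rho2 {Mf c ρ : ℝ} (hMf : 0 < Mf) (hc : 0 < c)
    (h1ρ : ρ^2 * (12*Mf^2*(1+1/c)+2) ≤ 1) : 2*ρ^2 < 1 := by
  have hMfc : (0:ℝ) < 12*Mf^2*(1+1/c) := by positivity
  nlinarith [h1ρ, hMfc, sq_nonneg ρ, mul_nonneg (sq_nonneg ρ) hMfc.le]

lemma obgd_rhoc {Mf c ρ : ℝ} (hMf : 0 < Mf) (hc : 0 < c)
    (h1ρ : ρ^2 * (12*Mf^2*(1+1/c)+2) ≤ 1) : 12*Mf^2*ρ^2*(c+1) ≤ c*(1-2*ρ^2) := by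
  have hcc : c*(1/c) = 1 := by field_simp
  have h2ρ := mul_le_mul_of_nonneg_left h1ρ hc.le
  have hcc2 : 12*Mf^2*ρ^2*(c*(1/c)) = 12*Mf^2*ρ^2 := by rw [hcc]; ring
  nlinarith [h2ρ, hcc2]

lemma obgd_alphaLy {μf Lf Ly c α : ℝ} (hμf : 0 < μf) (hc : 0 < c)
    (hc8 : 8 * c * (Lf^2 + Ly^2) ≤ μf^2) (hα : α = 4 * c / μf) :
    α^2*Ly^2 ≤ 2*c := by
  have hα2 : α^2 * μf^2 = 16*c^2 := by rw [hα]; field_simp; ring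
  have hα2L : α^2*μf^2*Ly^2 = 16*c^2*Ly^2 := by linear_combination Ly^2 * hα2
  nlinarith [hα2L, mul_le_mul_of_nonneg_left hc8 hc.le, mul_pos hμf hμf,
    sq_nonneg (c*Lf), hc.le]

lemma obgd_c18 {μf Lf Ly c : ℝ} (hc : 0 < c) (hLf : 0 < Lf) (hμf : 0 < μf)
    (hc8 : 8 * c * (Lf^2 + Ly^2) ≤ μf^2) (hμL : μf ≤ Lf) : c ≤ 1/8 := by
  nlinarith [hc8, mul_pos hLf hLf, sq_nonneg Ly, hμf, hμL]

lemma obgd_2aL {μf Lf Ly c α : ℝ} (hμf : 0 < μf) (hLf : 0 < Lf) (hLy : 0 < Ly)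
    (hc : 0 < c) (hc8 : 8 * c * (Lf^2 + Ly^2) ≤ μf^2) (hμL : μf ≤ Lf)
    (hα : α = 4 * c / μf) : 2*α*Lf ≤ 1 - Ly^2/(Lf^2+Ly^2) := by
  have h1ν : 1 - Ly^2/(Lf^2+Ly^2) = Lf^2/(Lf^2+Ly^2) := by field_simp; ring
  rw [hα, h1ν, show 2*(4*c/μf)*Lf = 8*c*Lf/μf from by ring,
    div_le_div_iff₀ hμf (by positivity)]
  nlinarith [mul_le_mul_of_nonneg_right hc8 hLf.le,
    mul_nonneg (mul_nonneg hμf.le hLf.le) (sub_nonneg.2 hμL)]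

lemma obgd_F {μf Lf Ly Mf c α ρ : ℝ} (hμf : 0 < μf) (hMf : 0 < Mf) (hc : 0 < c)
    (hc8 : 8 * c * (Lf^2 + Ly^2) ≤ μf^2) (hα : α = 4 * c / μf)
    (hρ2' : (0:ℝ) < 1 - 2*ρ^2)
    (h1ρ : ρ^2 * (12*Mf^2*(1+1/c)+2) ≤ 1) :
    12*Ly^2*(α^2 * Mf^2 / c * ρ^2 / (1 - 2*ρ^2)) ≤ 2*c := by
  have hρc := obgd_rhoc hMf hc h1ρ
  have hαLy := obgd_alphaLy hμf hc hc8 hα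
  have hpos : 0 < c*(1-2*ρ^2) := mul_pos hc hρ2'
  set K2 : ℝ := α^2 * Mf^2 / c * ρ^2 / (1 - 2*ρ^2) with hK2
  have hKεc : c*(α^2 * Mf^2 / c) = α^2*Mf^2 := by field_simp
  have hK2e : K2*(1-2*ρ^2) = (α^2 * Mf^2 / c)*ρ^2 := by rw [hK2, div_mul_cancel₀ _ (ne_of_gt hρ2')]
  clear_value K2
  have eA : (12*Ly^2*K2)*(c*(1-2*ρ^2)) = α^2*Ly^2*(12*Mf^2*ρ^2) := by
    linear_combination (12*Ly^2*c) * hK2e + (12*Ly^2*ρ^2) * hKεc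
  have hm1 : 12*Mf^2*ρ^2 ≤ c*(1-2*ρ^2) := by
    nlinarith [hρc, mul_nonneg (mul_nonneg (by positivity : (0:ℝ) ≤ 12*Mf^2) (sq_nonneg ρ)) hc.le]
  have hm2 : α^2*Ly^2*(12*Mf^2*ρ^2) ≤ α^2*Ly^2*(c*(1-2*ρ^2)) :=
    mul_le_mul_of_nonneg_left hm1 (by positivity)
  have hm3 : α^2*Ly^2*(c*(1-2*ρ^2)) ≤ (2*c)*(c*(1-2*ρ^2)) :=
    mul_le_mul_of_nonneg_right hαLy hpos.le
  have hstep : (12*Ly^2*K2)*(c*(1-2*ρ^2)) ≤ (2*c)*(c*(1-2*ρ^2)) := by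
    rw [eA]; exact hm2.trans hm3
  exact le_of_mul_le_mul_right hstep hpos

lemma obgd_muL_scalar {μ L A B gp gq n : ℝ} (h1 : A - gp + μ/2*n^2 ≤ B)
    (h2 : B + gq + μ/2*n^2 ≤ A) (h3 : gp - gq ≤ L*n^2) (hn : 0 < n^2) : μ ≤ L := by
  nlinarith

lemma obgd_young1 {α Mf c e n : ℝ} (hc : 0 < c) :
    2*α*(Mf*e*n) - c*n^2 ≤ α^2*Mf^2*e^2/c := by
  rw [le_div_iff₀ hc]
  nlinarith [sq_nonneg (c*n - α*Mf*e)]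

lemma obgd_young2 (s q d : ℝ) : s*q*d ≤ (1/2)*q^2 + (1/2)*(s*d)^2 := by
  nlinarith [sq_nonneg (q - s*d)]
set_option maxHeartbeats 1000000 in
/-- Small-loss dynamic regret bound for the online alternating (projected) gradient
method with nonnegative, smooth, strongly convex outer losses:
`BD-Regret_T = O(1 + P_{2,T} + Σ√(φ_t(x*_t)) + Y_{2,T})`. -/
theorem strongly_convex_small_loss_dynamic_regret
    (μf Lf Ly Mf ℓ0 D E0 c α ρ : ℝ)
    (hμf : 0 < μf) (hLf : 0 < Lf) (hLy : 0 < Ly) (hMf : 0 < Mf)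
    (hℓ0 : 0 < ℓ0) (hD : 0 < D) (hE0 : 0 < E0)
    (hc : 0 < c) (hcle : c ≤ μf ^ 2 / (8 * (Lf ^ 2 + Ly ^ 2)))
    (hα : α = 4 * c / μf)
    (hρ0 : 0 ≤ ρ) (hρ : ρ ^ 2 ≤ 1 / (12 * Mf ^ 2 * (1 + 1 / c) + 2)) :
    ∃ C > 0, ∀ (d1 d2 T : ℕ), 1 ≤ T →
      ∀ (X : Set (EuclideanSpace ℝ (Fin d1))), X.Nonempty → IsClosed X → Convex ℝ X →
      (∀ a ∈ X, ∀ b ∈ X, ‖a - b‖ ≤ D) →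
      ∀ (φ : ℕ → EuclideanSpace ℝ (Fin d1) → ℝ)
        (xstar x : ℕ → EuclideanSpace ℝ (Fin d1))
        (ystar : ℕ → EuclideanSpace ℝ (Fin d1) → EuclideanSpace ℝ (Fin d2))
        (y : ℕ → EuclideanSpace ℝ (Fin d2))
        (g : ℕ → EuclideanSpace ℝ (Fin d1)),
      -- φ_t nonnegative on all of ℝ^{d1}
      (∀ t ∈ Finset.Icc 1 T, ∀ z, 0 ≤ φ t z) →
      (∀ t ∈ Finset.Icc 1 T, Differentiable ℝ (φ t)) →
      -- μf-strong convexity of φ_t on X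
      (∀ t ∈ Finset.Icc 1 T, ConvexOn ℝ X (fun z => φ t z - μf / 2 * ‖z‖ ^ 2)) →
      -- Lf-Lipschitz gradient on all of ℝ^{d1}
      (∀ t ∈ Finset.Icc 1 T, ∀ a b,
        ‖gradient (φ t) a - gradient (φ t) b‖ ≤ Lf * ‖a - b‖) →
      -- bounded gradient on X
      (∀ t ∈ Finset.Icc 1 T, ∀ a ∈ X, ‖gradient (φ t) a‖ ≤ ℓ0) →
      -- x*_t minimizes φ_t over X
      (∀ t ∈ Finset.Icc 1 T, xstar t ∈ X ∧ ∀ z ∈ X, φ t (xstar t) ≤ φ t z) →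
      -- y*_t is Ly-Lipschitz
      (∀ t ∈ Finset.Icc 1 T, ∀ a b, ‖ystar t a - ystar t b‖ ≤ Ly * ‖a - b‖) →
      x 1 ∈ X →
      ‖y 1 - ystar 1 (x 1)‖ ≤ E0 →
      -- inner contraction
      (∀ t ∈ Finset.Icc 1 T, ‖y (t + 1) - ystar t (x t)‖ ≤ ρ * ‖y t - ystar t (x t)‖) →
      -- approximate hypergradient and projected update
      (∀ t ∈ Finset.Icc 1 T,
        ‖g t - gradient (φ t) (x t)‖ ≤ Mf * ‖y (t + 1) - ystar t (x t)‖ ∧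
        x (t + 1) ∈ X ∧
        ∀ z ∈ X, ‖x (t + 1) - (x t - α • g t)‖ ≤ ‖z - (x t - α • g t)‖) →
      ∑ t ∈ Finset.Icc 1 T, (φ t (x t) - φ t (xstar t))
        ≤ C * (1 + (∑ t ∈ Finset.Icc 2 T, ‖xstar (t - 1) - xstar t‖ ^ 2)
            + (∑ t ∈ Finset.Icc 1 T, Real.sqrt (φ t (xstar t)))
            + ∑ t ∈ Finset.Icc 2 T,
                ‖ystar (t - 1) (xstar (t - 1)) - ystar t (xstar t)‖ ^ 2) := by
  have hαpos : 0 < α := by rw [hα]; positivity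
  have hαne : α ≠ 0 := ne_of_gt hαpos
  have hc8 : 8 * c * (Lf^2 + Ly^2) ≤ μf^2 := by
    rw [le_div_iff₀ (by positivity)] at hcle; linarith
  have hden : (0:ℝ) < 12*Mf^2*(1+1/c) + 2 := by positivity
  have h1ρ : ρ^2 * (12*Mf^2*(1+1/c)+2) ≤ 1 := (le_div_iff₀ hden).1 hρ
  have hρ2 : 2*ρ^2 < 1 := obgd_rho2 hMf hc h1ρ
  have hρ2' : (0:ℝ) < 1 - 2*ρ^2 := by linarith
  set ν : ℝ := Ly^2 / (Lf^2 + Ly^2) with hν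
  have hνpos : 0 < ν := div_pos (pow_pos hLy 2) (by positivity)
  have hνne : ν ≠ 0 := ne_of_gt hνpos
  set Kε : ℝ := α^2 * Mf^2 / c with hKε
  have hKεnn : 0 ≤ Kε := le_of_lt (div_pos (by positivity) hc)
  set K2 : ℝ := Kε * ρ^2 / (1 - 2*ρ^2) with hK2
  have hK2nn : 0 ≤ K2 := div_nonneg (mul_nonneg hKεnn (sq_nonneg ρ)) hρ2'.le
  set s4L : ℝ := Real.sqrt (4*Lf) with hs4L
  have hs4Lnn : 0 ≤ s4L := Real.sqrt_nonneg _
  set J : ℝ := 3/(4*α) + 3*Lf/ν with hJ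
  have hJpos : 0 < J :=
    add_pos (div_pos (by norm_num) (by linarith)) (div_pos (by positivity) hνpos)
  set C : ℝ := J * (D^2 + K2*E0^2 + 1/c + 6*K2) + s4L * D + 1 with hC
  have hbnn : 0 ≤ D^2 + K2*E0^2 + 1/c + 6*K2 := by
    have h1 : 0 ≤ K2*E0^2 := mul_nonneg hK2nn (sq_nonneg _)
    have h2 : (0:ℝ) ≤ 1/c := by positivity
    have h3 : (0:ℝ) ≤ 6*K2 := by linarith only [hK2nn]
    have h4 := sq_nonneg D
    linarith only [h1, h2, h3, h4]
  have hCpos : 0 < C := by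
    rw [hC]
    have h1 := mul_nonneg hJpos.le hbnn
    have h2 := mul_nonneg hs4Lnn hD.le
    linarith only [h1, h2]
  have hαμ : α * μf = 4 * c := by rw [hα]; field_simp
  have hF : 12*Ly^2*K2 ≤ 2*c := by
    rw [hK2, hKε]; exact obgd_F hμf hMf hc hc8 hα hρ2' h1ρ
  have hK2e : K2*(1-2*ρ^2) = Kε*ρ^2 := by
    rw [hK2]; exact div_mul_cancel₀ _ (ne_of_gt hρ2')
  clear_value ν Kε K2 s4L J C
  refine ⟨C, hCpos, ?_⟩
  intro d1 d2 T hT X hXne hXcl hXconv hXdiam φ xstar x ystar y g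
    hφ0 hφdiff hφsc hφlip hφgb hxs hys hx1 hy1 hcontr hupd
  have hPnn : (0:ℝ) ≤ ∑ t ∈ Finset.Icc 2 T, ‖xstar (t-1) - xstar t‖^2 :=
    Finset.sum_nonneg fun i _ => by positivity
  have hWnn : (0:ℝ) ≤ ∑ t ∈ Finset.Icc 2 T, ‖ystar (t-1) (xstar (t-1)) - ystar t (xstar t)‖^2 :=
    Finset.sum_nonneg fun i _ => by positivity
  have hΦnn : (0:ℝ) ≤ ∑ t ∈ Finset.Icc 1 T, Real.sqrt (φ t (xstar t)) :=
    Finset.sum_nonneg fun i _ => Real.sqrt_nonneg _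
  have hxmem : ∀ t, t ∈ Finset.Icc 1 (T+1) → x t ∈ X := by
    intro t ht
    have htm := Finset.mem_Icc.1 ht
    match t, htm with
    | 0, h => exact absurd h.1 (by omega)
    | 1, _ => exact hx1
    | (m+2), h => exact (hupd (m+1) (Finset.mem_Icc.2 ⟨by omega, by omega⟩)).2.1
  by_cases hdeg : ∀ p ∈ X, ∀ q ∈ X, p = q
  · have hzero : ∀ t ∈ Finset.Icc 1 T, φ t (x t) - φ t (xstar t) = 0 := by
      intro t ht
      have htm := Finset.mem_Icc.1 ht
      have hx' : x t = xstar t :=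
        hdeg (x t) (hxmem t (Finset.mem_Icc.2 ⟨htm.1, by omega⟩)) (xstar t) (hxs t ht).1
      rw [hx']; ring
    rw [Finset.sum_congr rfl hzero, Finset.sum_const_zero]
    exact mul_nonneg hCpos.le (by linarith only [hPnn, hWnn, hΦnn])
  push_neg at hdeg
  obtain ⟨p, hp, q, hq, hpq⟩ := hdeg
  have h1T : (1:ℕ) ∈ Finset.Icc 1 T := Finset.mem_Icc.2 ⟨le_rfl, hT⟩
  have hμL : μf ≤ Lf := by
    have hs1 := obgd_strong_ineq (hφdiff 1 h1T) (hφsc 1 h1T) hp hq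
    have hs2 := obgd_strong_ineq (hφdiff 1 h1T) (hφsc 1 h1T) hq hp
    have e1 : ⟪gradient (φ 1) p, q - p⟫_ℝ = -⟪gradient (φ 1) p, p - q⟫_ℝ := by
      rw [show q - p = -(p - q) from by abel, inner_neg_right]
    have e2 : ‖q - p‖ = ‖p - q‖ := norm_sub_rev _ _
    rw [e1, e2] at hs1
    have hnpos : 0 < ‖p - q‖ := by rw [norm_pos_iff]; exact sub_ne_zero.2 hpq
    have hGin : ⟪gradient (φ 1) p, p - q⟫_ℝ - ⟪gradient (φ 1) q, p - q⟫_ℝ ≤ Lf*‖p-q‖^2 := by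
      have h1 := real_inner_le_norm (gradient (φ 1) p - gradient (φ 1) q) (p - q)
      have hl := hφlip 1 h1T p q
      have h2 : ⟪gradient (φ 1) p - gradient (φ 1) q, p - q⟫_ℝ
          = ⟪gradient (φ 1) p, p - q⟫_ℝ - ⟪gradient (φ 1) q, p - q⟫_ℝ := inner_sub_left _ _ _
      have h3 : ‖gradient (φ 1) p - gradient (φ 1) q‖ * ‖p - q‖ ≤ (Lf*‖p-q‖) * ‖p-q‖ :=
        mul_le_mul_of_nonneg_right hl (norm_nonneg _)
      have h4 : (Lf*‖p-q‖) * ‖p-q‖ = Lf*‖p-q‖^2 := by ring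
      linarith only [h1, h2, h3, h4]
    have hh1 : φ 1 p - ⟪gradient (φ 1) p, p - q⟫_ℝ + μf/2*‖p-q‖^2 ≤ φ 1 q := by
      linarith only [hs1]
    exact obgd_muL_scalar hh1 hs2 hGin (pow_pos hnpos 2)
  have hc18 : c ≤ 1/8 := obgd_c18 hc hLf hμf hc8 hμL
  have h2αL : 2*α*Lf ≤ 1 - ν := by
    rw [hν]; exact obgd_2aL hμf hLf hLy hc hc8 hμL hα
  -- per-step main inequality
  have hstep6 : ∀ t ∈ Finset.Icc 1 T,
      (1-c)*‖x (t+1) - xstar t‖^2 + (2*α)*(φ t (x (t+1)) - φ t (xstar t))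
        + ν*‖x (t+1) - x t‖^2
      ≤ (1-4*c)*‖x t - xstar t‖^2 + Kε*‖y (t+1) - ystar t (x t)‖^2 := by
    intro t ht
    have htm := Finset.mem_Icc.1 ht
    obtain ⟨herr, hvX, hmin⟩ := hupd t ht
    have huX : x t ∈ X := hxmem t (Finset.mem_Icc.2 ⟨htm.1, by omega⟩)
    have hzX := (hxs t ht).1
    have hproj := obgd_proj hXconv hvX hzX hmin
    have hexp1 : ‖(x t - α • g t) - xstar t‖^2
        = ‖x t - xstar t‖^2 - 2*α*⟪x t - xstar t, g t⟫_ℝ + α^2*‖g t‖^2 := by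
      rw [show (x t - α • g t) - xstar t = (x t - xstar t) - α • g t from by abel,
        norm_sub_sq_real, real_inner_smul_right, norm_smul, Real.norm_eq_abs, mul_pow, sq_abs]
      ring
    have hexp2 : ‖(x t - α • g t) - x (t+1)‖^2
        = ‖x (t+1) - x t‖^2 - 2*α*⟪x t - x (t+1), g t⟫_ℝ + α^2*‖g t‖^2 := by
      rw [show (x t - α • g t) - x (t+1) = (x t - x (t+1)) - α • g t from by abel,
        norm_sub_sq_real, real_inner_smul_right, norm_smul, Real.norm_eq_abs, mul_pow, sq_abs,
        norm_sub_rev (x t) (x (t+1))]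
      ring
    have hchain : ‖x (t+1) - xstar t‖^2 ≤ ‖x t - xstar t‖^2 - ‖x (t+1) - x t‖^2
        - 2*α*(⟪x t - xstar t, g t⟫_ℝ - ⟪x t - x (t+1), g t⟫_ℝ) := by
      linarith only [hproj, hexp1, hexp2]
    have hdecomp : ⟪x t - xstar t, g t⟫_ℝ - ⟪x t - x (t+1), g t⟫_ℝ
        = ⟪gradient (φ t) (x t), x (t+1) - x t⟫_ℝ
          + ⟪gradient (φ t) (x t), x t - xstar t⟫_ℝ
          + ⟪g t - gradient (φ t) (x t), x (t+1) - xstar t⟫_ℝ := by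
      have e1 : ⟪x t - xstar t, g t⟫_ℝ - ⟪x t - x (t+1), g t⟫_ℝ
          = ⟪x (t+1) - xstar t, g t⟫_ℝ := by
        rw [← inner_sub_left]
        congr 1
        abel
      have e2 : ⟪gradient (φ t) (x t), x (t+1) - x t⟫_ℝ
            + ⟪gradient (φ t) (x t), x t - xstar t⟫_ℝ
          = ⟪gradient (φ t) (x t), x (t+1) - xstar t⟫_ℝ := by
        rw [← inner_add_right]
        congr 1
        abel
      have e3 : ⟪g t - gradient (φ t) (x t), x (t+1) - xstar t⟫_ℝ
          = ⟪g t, x (t+1) - xstar t⟫_ℝ - ⟪gradient (φ t) (x t), x (t+1) - xstar t⟫_ℝ :=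
        inner_sub_left _ _ _
      have e4 : ⟪x (t+1) - xstar t, g t⟫_ℝ = ⟪g t, x (t+1) - xstar t⟫_ℝ :=
        real_inner_comm _ _
      rw [e1, e4]
      linarith only [e2, e3]
    have hdesc := obgd_descent (hφdiff t ht) hLf.le (hφlip t ht) (x t) (x (t+1))
    have hsc := obgd_strong_ineq (hφdiff t ht) (hφsc t ht) huX hzX
    have hsc' : φ t (x t) - φ t (xstar t) + μf/2 * ‖x t - xstar t‖^2
        ≤ ⟪gradient (φ t) (x t), x t - xstar t⟫_ℝ := by
      have e5 : ⟪gradient (φ t) (x t), xstar t - x t⟫_ℝ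
          = -⟪gradient (φ t) (x t), x t - xstar t⟫_ℝ := by
        rw [show xstar t - x t = -(x t - xstar t) from by abel, inner_neg_right]
      rw [e5, norm_sub_rev (xstar t) (x t)] at hsc
      linarith only [hsc]
    have herr2 : -(Mf*‖y (t+1) - ystar t (x t)‖ * ‖x (t+1) - xstar t‖)
        ≤ ⟪g t - gradient (φ t) (x t), x (t+1) - xstar t⟫_ℝ := by
      have h1 := abs_real_inner_le_norm (g t - gradient (φ t) (x t)) (x (t+1) - xstar t)
      have h2 : ‖g t - gradient (φ t) (x t)‖ * ‖x (t+1) - xstar t‖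
          ≤ Mf*‖y (t+1) - ystar t (x t)‖ * ‖x (t+1) - xstar t‖ :=
        mul_le_mul_of_nonneg_right herr (norm_nonneg _)
      have h3 := neg_abs_le ⟪g t - gradient (φ t) (x t), x (t+1) - xstar t⟫_ℝ
      linarith only [h1, h2, h3]
    have hlow : (φ t (x (t+1)) - φ t (x t) - Lf*‖x (t+1) - x t‖^2)
        + (φ t (x t) - φ t (xstar t) + μf/2*‖x t - xstar t‖^2)
        - Mf*‖y (t+1) - ystar t (x t)‖ * ‖x (t+1) - xstar t‖
        ≤ ⟪x t - xstar t, g t⟫_ℝ - ⟪x t - x (t+1), g t⟫_ℝ := by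
      rw [hdecomp]
      linarith only [hdesc, hsc', herr2]
    have hmul := mul_le_mul_of_nonneg_left hlow (by linarith only [hαpos] : (0:ℝ) ≤ 2*α)
    have hDdnn : (0:ℝ) ≤ ‖x (t+1) - x t‖^2 := by positivity
    have f9 := mul_le_mul_of_nonneg_right h2αL hDdnn
    have e6 : 2*α*(μf/2*‖x t - xstar t‖^2) = (4*c)*‖x t - xstar t‖^2 := by
      linear_combination ‖x t - xstar t‖^2 * hαμ
    have hyoung : 2*α*(Mf*‖y (t+1) - ystar t (x t)‖*‖x (t+1) - xstar t‖)
        - c*‖x (t+1) - xstar t‖^2 ≤ Kε*‖y (t+1) - ystar t (x t)‖^2 := by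
      have h1 := obgd_young1 (α := α) (Mf := Mf) (e := ‖y (t+1) - ystar t (x t)‖)
        (n := ‖x (t+1) - xstar t‖) hc
      have h2 : Kε*‖y (t+1) - ystar t (x t)‖^2
          = α^2*Mf^2*‖y (t+1) - ystar t (x t)‖^2/c := by rw [hKε]; ring
      linarith only [h1, h2]
    linarith only [hchain, hmul, f9, e6, hyoung]
  -- per-step regret transfer
  have hstep5 : ∀ t ∈ Finset.Icc 1 T,
      φ t (x t) - φ t (xstar t)
        ≤ (3/2)*(φ t (x (t+1)) - φ t (xstar t)) + (3*Lf)*‖x (t+1) - x t‖^2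
          + (s4L*D)*Real.sqrt (φ t (xstar t)) := by
    intro t ht
    have htm := Finset.mem_Icc.1 ht
    have hvX : x (t+1) ∈ X := (hupd t ht).2.1
    have huX : x t ∈ X := hxmem t (Finset.mem_Icc.2 ⟨htm.1, by omega⟩)
    have hR'nn : 0 ≤ φ t (x (t+1)) - φ t (xstar t) := by
      have h0 := (hxs t ht).2 (x (t+1)) hvX
      linarith only [h0]
    have hφznn : 0 ≤ φ t (xstar t) := hφ0 t ht _
    have hdesc := obgd_descent (hφdiff t ht) hLf.le (hφlip t ht) (x (t+1)) (x t)
    have hsb := obgd_selfbound (hφdiff t ht) hLf (hφlip t ht) (hφ0 t ht) (x (t+1))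
    have hGn : ‖gradient (φ t) (x (t+1))‖
        ≤ s4L * (Real.sqrt (φ t (x (t+1)) - φ t (xstar t)) + Real.sqrt (φ t (xstar t))) := by
      have h1 : ‖gradient (φ t) (x (t+1))‖ = Real.sqrt (‖gradient (φ t) (x (t+1))‖^2) :=
        (Real.sqrt_sq (norm_nonneg _)).symm
      have h2 : Real.sqrt (‖gradient (φ t) (x (t+1))‖^2)
          ≤ Real.sqrt (4*Lf*φ t (x (t+1))) := Real.sqrt_le_sqrt hsb
      have h3 : Real.sqrt (4*Lf*φ t (x (t+1))) = s4L * Real.sqrt (φ t (x (t+1))) := by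
        rw [hs4L, ← Real.sqrt_mul (by positivity : (0:ℝ) ≤ 4*Lf)]
      have h4 : Real.sqrt (φ t (x (t+1)))
          ≤ Real.sqrt (φ t (x (t+1)) - φ t (xstar t)) + Real.sqrt (φ t (xstar t)) := by
        have h5 := obgd_sqrt_add _ _ hR'nn hφznn
        rw [show φ t (x (t+1)) - φ t (xstar t) + φ t (xstar t) = φ t (x (t+1)) from by ring] at h5
        exact h5
      calc ‖gradient (φ t) (x (t+1))‖ = Real.sqrt (‖gradient (φ t) (x (t+1))‖^2) := h1
        _ ≤ Real.sqrt (4*Lf*φ t (x (t+1))) := h2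
        _ = s4L * Real.sqrt (φ t (x (t+1))) := h3
        _ ≤ s4L * (Real.sqrt (φ t (x (t+1)) - φ t (xstar t)) + Real.sqrt (φ t (xstar t))) :=
            mul_le_mul_of_nonneg_left h4 hs4Lnn
    have hinner := real_inner_le_norm (gradient (φ t) (x (t+1))) (x t - x (t+1))
    have hdD : ‖x t - x (t+1)‖ ≤ D := hXdiam _ huX _ hvX
    have hdnn : (0:ℝ) ≤ ‖x t - x (t+1)‖ := norm_nonneg _
    have hdsq : ‖x t - x (t+1)‖^2 = ‖x (t+1) - x t‖^2 := by rw [norm_sub_rev]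
    have hs4Lsq : s4L^2 = 4*Lf := by rw [hs4L]; exact Real.sq_sqrt (by positivity)
    have hy1' : s4L * Real.sqrt (φ t (x (t+1)) - φ t (xstar t)) * ‖x t - x (t+1)‖
        ≤ (1/2)*(φ t (x (t+1)) - φ t (xstar t)) + 2*Lf*‖x t - x (t+1)‖^2 := by
      have h1 := obgd_young2 s4L (Real.sqrt (φ t (x (t+1)) - φ t (xstar t))) ‖x t - x (t+1)‖
      have h2 : Real.sqrt (φ t (x (t+1)) - φ t (xstar t))^2 = φ t (x (t+1)) - φ t (xstar t) :=
        Real.sq_sqrt hR'nn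
      have h3 : (s4L*‖x t - x (t+1)‖)^2 = 4*Lf*‖x t - x (t+1)‖^2 := by
        rw [mul_pow, hs4Lsq]
      linarith only [h1, h2, h3]
    have hy2' : s4L * Real.sqrt (φ t (xstar t)) * ‖x t - x (t+1)‖
        ≤ (s4L*D)*Real.sqrt (φ t (xstar t)) := by
      have h0 : 0 ≤ s4L * Real.sqrt (φ t (xstar t)) :=
        mul_nonneg hs4Lnn (Real.sqrt_nonneg _)
      have h1 := mul_le_mul_of_nonneg_left hdD h0
      linarith only [h1]
    have hmd := mul_le_mul_of_nonneg_right hGn hdnn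
    have hdsq2 : Lf*‖x t - x (t+1)‖^2 = Lf*‖x (t+1) - x t‖^2 := by rw [norm_sub_rev]
    linarith only [hdesc, hinner, hmd, hy1', hy2', hdsq2]
  -- per-step comparator-shift inequality
  have hstep7 : ∀ t ∈ Finset.Icc 1 (T-1),
      c*((1-2*c)*‖x (t+1) - xstar (t+1)‖^2)
        ≤ c*((1-c)*‖x (t+1) - xstar t‖^2) + ‖xstar t - xstar (t+1)‖^2 := by
    intro t _
    have htri : ‖x (t+1) - xstar (t+1)‖ ≤ ‖x (t+1) - xstar t‖ + ‖xstar t - xstar (t+1)‖ := by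
      have h0 : x (t+1) - xstar (t+1) = (x (t+1) - xstar t) + (xstar t - xstar (t+1)) := by abel
      rw [h0]; exact norm_add_le _ _
    exact obgd_sq2 hc hc18 (norm_nonneg _) htri (norm_nonneg _) (norm_nonneg _)
  -- per-step inner-error recursion
  have hstep8 : ∀ t ∈ Finset.Icc 1 (T-1),
      ‖y (t+1) - ystar (t+1) (x (t+1))‖^2
        ≤ (2*ρ^2)*‖y t - ystar t (x t)‖^2 + (6*Ly^2)*‖x t - xstar t‖^2
          + (6*Ly^2)*‖x (t+1) - xstar (t+1)‖^2
          + 6*‖ystar t (xstar t) - ystar (t+1) (xstar (t+1))‖^2 := by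
    intro t ht
    have htm := Finset.mem_Icc.1 ht
    have ht1 : t ∈ Finset.Icc 1 T := Finset.mem_Icc.2 ⟨htm.1, by omega⟩
    have ht2 : t+1 ∈ Finset.Icc 1 T := Finset.mem_Icc.2 ⟨by omega, by omega⟩
    have h1 := hcontr t ht1
    have h2 := hys t ht1 (x t) (xstar t)
    have h3 := hys (t+1) ht2 (xstar (t+1)) (x (t+1))
    have habel : y (t+1) - ystar (t+1) (x (t+1))
        = (y (t+1) - ystar t (x t)) + (ystar t (x t) - ystar t (xstar t))
          + (ystar t (xstar t) - ystar (t+1) (xstar (t+1)))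
          + (ystar (t+1) (xstar (t+1)) - ystar (t+1) (x (t+1))) := by abel
    have htri : ‖y (t+1) - ystar (t+1) (x (t+1))‖
        ≤ ‖y (t+1) - ystar t (x t)‖ + ‖ystar t (x t) - ystar t (xstar t)‖
          + ‖ystar t (xstar t) - ystar (t+1) (xstar (t+1))‖
          + ‖ystar (t+1) (xstar (t+1)) - ystar (t+1) (x (t+1))‖ := by
      rw [habel]
      have t1 := norm_add_le ((y (t+1) - ystar t (x t)) + (ystar t (x t) - ystar t (xstar t))
        + (ystar t (xstar t) - ystar (t+1) (xstar (t+1))))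
        (ystar (t+1) (xstar (t+1)) - ystar (t+1) (x (t+1)))
      have t2 := norm_add_le ((y (t+1) - ystar t (x t)) + (ystar t (x t) - ystar t (xstar t)))
        (ystar t (xstar t) - ystar (t+1) (xstar (t+1)))
      have t3 := norm_add_le (y (t+1) - ystar t (x t)) (ystar t (x t) - ystar t (xstar t))
      linarith only [t1, t2, t3]
    have hbig : ‖y (t+1) - ystar (t+1) (x (t+1))‖
        ≤ ρ*‖y t - ystar t (x t)‖ + Ly*‖x t - xstar t‖
          + ‖ystar t (xstar t) - ystar (t+1) (xstar (t+1))‖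
          + Ly*‖xstar (t+1) - x (t+1)‖ := by
      linarith only [htri, h1, h2, h3]
    have hsq := obgd_sq4 (norm_nonneg _) (mul_nonneg hρ0 (norm_nonneg _))
      (mul_nonneg hLy.le (norm_nonneg _)) (norm_nonneg _)
      (mul_nonneg hLy.le (norm_nonneg _)) hbig
    have e1 : (ρ*‖y t - ystar t (x t)‖)^2 = ρ^2*‖y t - ystar t (x t)‖^2 := mul_pow _ _ _
    have e2 : (Ly*‖x t - xstar t‖)^2 = Ly^2*‖x t - xstar t‖^2 := mul_pow _ _ _
    have e3 : (Ly*‖xstar (t+1) - x (t+1)‖)^2 = Ly^2*‖x (t+1) - xstar (t+1)‖^2 := by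
      rw [mul_pow, norm_sub_rev]
    linarith only [hsq, e1, e2, e3]
  -- per-step contraction squared
  have hstepE : ∀ t ∈ Finset.Icc 1 T,
      ‖y (t+1) - ystar t (x t)‖^2 ≤ ρ^2*‖y t - ystar t (x t)‖^2 := by
    intro t ht
    have h1 := pow_le_pow_left₀ (norm_nonneg _) (hcontr t ht) 2
    rwa [mul_pow] at h1
  -- aggregate
  have hIs := Finset.sum_le_sum hstep6
  rw [Finset.sum_add_distrib, Finset.sum_add_distrib, Finset.sum_add_distrib,
    ← Finset.mul_sum, ← Finset.mul_sum, ← Finset.mul_sum, ← Finset.mul_sum,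
    ← Finset.mul_sum] at hIs
  have hVs := Finset.sum_le_sum hstep5
  rw [Finset.sum_add_distrib, Finset.sum_add_distrib,
    ← Finset.mul_sum, ← Finset.mul_sum, ← Finset.mul_sum] at hVs
  have hIIIs := Finset.sum_le_sum hstepE
  rw [← Finset.mul_sum] at hIIIs
  have h7s := Finset.sum_le_sum hstep7
  rw [Finset.sum_add_distrib, ← Finset.mul_sum, ← Finset.mul_sum, ← Finset.mul_sum,
    ← Finset.mul_sum] at h7s
  have h8s := Finset.sum_le_sum hstep8
  rw [Finset.sum_add_distrib, Finset.sum_add_distrib, Finset.sum_add_distrib,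
    ← Finset.mul_sum, ← Finset.mul_sum, ← Finset.mul_sum, ← Finset.mul_sum] at h8s
  -- index gymnastics
  have hsplitA : ∑ t ∈ Finset.Icc 1 T, ‖x t - xstar t‖^2
      = ‖x 1 - xstar 1‖^2 + ∑ t ∈ Finset.Icc 2 T, ‖x t - xstar t‖^2 :=
    obgd_sum_split T hT _
  have hshiftA : ∑ t ∈ Finset.Icc 2 T, ‖x t - xstar t‖^2
      = ∑ t ∈ Finset.Icc 1 (T-1), ‖x (t+1) - xstar (t+1)‖^2 :=
    obgd_sum_shift T hT _
  have hsplitδ : ∑ t ∈ Finset.Icc 1 T, ‖y t - ystar t (x t)‖^2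
      = ‖y 1 - ystar 1 (x 1)‖^2 + ∑ t ∈ Finset.Icc 2 T, ‖y t - ystar t (x t)‖^2 :=
    obgd_sum_split T hT _
  have hshiftδ : ∑ t ∈ Finset.Icc 2 T, ‖y t - ystar t (x t)‖^2
      = ∑ t ∈ Finset.Icc 1 (T-1), ‖y (t+1) - ystar (t+1) (x (t+1))‖^2 :=
    obgd_sum_shift T hT _
  have hPsh : ∑ t ∈ Finset.Icc 2 T, ‖xstar (t-1) - xstar t‖^2
      = ∑ t ∈ Finset.Icc 1 (T-1), ‖xstar t - xstar (t+1)‖^2 := by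
    rw [obgd_sum_shift T hT]
    exact Finset.sum_congr rfl fun t _ => by simp
  have hWsh : ∑ t ∈ Finset.Icc 2 T, ‖ystar (t-1) (xstar (t-1)) - ystar t (xstar t)‖^2
      = ∑ t ∈ Finset.Icc 1 (T-1), ‖ystar t (xstar t) - ystar (t+1) (xstar (t+1))‖^2 := by
    rw [obgd_sum_shift T hT]
    exact Finset.sum_congr rfl fun t _ => by simp
  have hsubB : ∑ t ∈ Finset.Icc 1 (T-1), ‖x (t+1) - xstar t‖^2
      ≤ ∑ t ∈ Finset.Icc 1 T, ‖x (t+1) - xstar t‖^2 :=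
    Finset.sum_le_sum_of_subset_of_nonneg
      (Finset.Icc_subset_Icc_right (by omega)) (fun i _ _ => by positivity)
  have hsubδ : ∑ t ∈ Finset.Icc 1 (T-1), ‖y t - ystar t (x t)‖^2
      ≤ ∑ t ∈ Finset.Icc 1 T, ‖y t - ystar t (x t)‖^2 :=
    Finset.sum_le_sum_of_subset_of_nonneg
      (Finset.Icc_subset_Icc_right (by omega)) (fun i _ _ => by positivity)
  have hsubA : ∑ t ∈ Finset.Icc 1 (T-1), ‖x t - xstar t‖^2
      ≤ ∑ t ∈ Finset.Icc 1 T, ‖x t - xstar t‖^2 :=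
    Finset.sum_le_sum_of_subset_of_nonneg
      (Finset.Icc_subset_Icc_right (by omega)) (fun i _ _ => by positivity)
  have hA1D : ‖x 1 - xstar 1‖^2 ≤ D^2 :=
    pow_le_pow_left₀ (norm_nonneg _) (hXdiam (x 1) hx1 (xstar 1) (hxs 1 h1T).1) 2
  have hdd1 : ‖y 1 - ystar 1 (x 1)‖^2 ≤ E0^2 := pow_le_pow_left₀ (norm_nonneg _) hy1 2
  have hA1nn : (0:ℝ) ≤ ‖x 1 - xstar 1‖^2 := by positivity
  have hSAnn : (0:ℝ) ≤ ∑ t ∈ Finset.Icc 1 T, ‖x t - xstar t‖^2 :=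
    Finset.sum_nonneg fun i _ => by positivity
  have hSDnn : (0:ℝ) ≤ ∑ t ∈ Finset.Icc 1 T, ‖x (t+1) - x t‖^2 :=
    Finset.sum_nonneg fun i _ => by positivity
  have hSR'nn : (0:ℝ) ≤ ∑ t ∈ Finset.Icc 1 T, (φ t (x (t+1)) - φ t (xstar t)) :=
    Finset.sum_nonneg fun t ht => by
      have h0 := (hxs t ht).2 (x (t+1)) ((hupd t ht).2.1)
      linarith only [h0]
  -- comparator-shift aggregate
  have hc12 : (0:ℝ) ≤ c*(1-2*c) := mul_nonneg hc.le (by linarith only [hc18])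
  have e1 : c*((1-2*c)*(∑ t ∈ Finset.Icc 1 T, ‖x t - xstar t‖^2))
      = c*((1-2*c)*‖x 1 - xstar 1‖^2)
        + c*((1-2*c)*(∑ t ∈ Finset.Icc 1 (T-1), ‖x (t+1) - xstar (t+1)‖^2)) := by
    rw [hsplitA, hshiftA]; ring
  have e3 : c*((1-2*c)*‖x 1 - xstar 1‖^2) ≤ c*((1-2*c)*D^2) := by
    have h1 := mul_le_mul_of_nonneg_left hA1D hc12
    linarith only [h1]
  have e4 : c*((1-c)*(∑ t ∈ Finset.Icc 1 (T-1), ‖x (t+1) - xstar t‖^2))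
      ≤ c*((1-c)*(∑ t ∈ Finset.Icc 1 T, ‖x (t+1) - xstar t‖^2)) := by
    have h0 : (0:ℝ) ≤ c*(1-c) := mul_nonneg hc.le (by linarith only [hc18])
    have h1 := mul_le_mul_of_nonneg_left hsubB h0
    linarith only [h1]
  have hII : c*((1-2*c)*(∑ t ∈ Finset.Icc 1 T, ‖x t - xstar t‖^2))
      ≤ c*((1-2*c)*D^2) + c*((1-c)*(∑ t ∈ Finset.Icc 1 T, ‖x (t+1) - xstar t‖^2))
        + (∑ t ∈ Finset.Icc 2 T, ‖xstar (t-1) - xstar t‖^2) := by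
    rw [e1, hPsh]
    linarith only [h7s, e3, e4]
  -- inner-error aggregate
  have hIV : (∑ t ∈ Finset.Icc 1 T, ‖y t - ystar t (x t)‖^2)
      ≤ E0^2 + 2*ρ^2*(∑ t ∈ Finset.Icc 1 T, ‖y t - ystar t (x t)‖^2)
        + 12*Ly^2*(∑ t ∈ Finset.Icc 1 T, ‖x t - xstar t‖^2)
        + 6*(∑ t ∈ Finset.Icc 2 T, ‖ystar (t-1) (xstar (t-1)) - ystar t (xstar t)‖^2) := by
    have m1 : (2*ρ^2)*(∑ t ∈ Finset.Icc 1 (T-1), ‖y t - ystar t (x t)‖^2)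
        ≤ (2*ρ^2)*(∑ t ∈ Finset.Icc 1 T, ‖y t - ystar t (x t)‖^2) :=
      mul_le_mul_of_nonneg_left hsubδ (by positivity : (0:ℝ) ≤ 2*ρ^2)
    have m2 : (6*Ly^2)*(∑ t ∈ Finset.Icc 1 (T-1), ‖x t - xstar t‖^2)
        ≤ (6*Ly^2)*(∑ t ∈ Finset.Icc 1 T, ‖x t - xstar t‖^2) :=
      mul_le_mul_of_nonneg_left hsubA (by positivity : (0:ℝ) ≤ 6*Ly^2)
    have hS2A : (∑ t ∈ Finset.Icc 1 (T-1), ‖x (t+1) - xstar (t+1)‖^2)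
        ≤ (∑ t ∈ Finset.Icc 1 T, ‖x t - xstar t‖^2) := by
      linarith only [hsplitA, hshiftA, hA1nn]
    have m3 : (6*Ly^2)*(∑ t ∈ Finset.Icc 1 (T-1), ‖x (t+1) - xstar (t+1)‖^2)
        ≤ (6*Ly^2)*(∑ t ∈ Finset.Icc 1 T, ‖x t - xstar t‖^2) :=
      mul_le_mul_of_nonneg_left hS2A (by positivity : (0:ℝ) ≤ 6*Ly^2)
    rw [hWsh]
    linarith only [h8s, hsplitδ, hshiftδ, hdd1, m1, m2, m3]
  -- error charging
  have hKe : Kε*(∑ t ∈ Finset.Icc 1 T, ‖y (t+1) - ystar t (x t)‖^2)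
      ≤ K2*E0^2 + 2*c*(∑ t ∈ Finset.Icc 1 T, ‖x t - xstar t‖^2)
        + 6*K2*(∑ t ∈ Finset.Icc 2 T, ‖ystar (t-1) (xstar (t-1)) - ystar t (xstar t)‖^2) := by
    have m1 := mul_le_mul_of_nonneg_left hIIIs hKεnn
    have m2 : Kε*(ρ^2*(∑ t ∈ Finset.Icc 1 T, ‖y t - ystar t (x t)‖^2))
        = K2*((1-2*ρ^2)*(∑ t ∈ Finset.Icc 1 T, ‖y t - ystar t (x t)‖^2)) := by
      linear_combination (-(∑ t ∈ Finset.Icc 1 T, ‖y t - ystar t (x t)‖^2)) * hK2e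
    have m3 : (1-2*ρ^2)*(∑ t ∈ Finset.Icc 1 T, ‖y t - ystar t (x t)‖^2)
        ≤ E0^2 + 12*Ly^2*(∑ t ∈ Finset.Icc 1 T, ‖x t - xstar t‖^2)
          + 6*(∑ t ∈ Finset.Icc 2 T, ‖ystar (t-1) (xstar (t-1)) - ystar t (xstar t)‖^2) := by
      linarith only [hIV]
    have m4 := mul_le_mul_of_nonneg_left m3 hK2nn
    have m5 := mul_le_mul_of_nonneg_right hF hSAnn
    linarith only [m1, m2, m4, m5]
  -- main bound on the auxiliary sums
  have hdiv : (1-2*c)*(∑ t ∈ Finset.Icc 1 T, ‖x t - xstar t‖^2)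
      - (1-2*c)*D^2 - (1-c)*(∑ t ∈ Finset.Icc 1 T, ‖x (t+1) - xstar t‖^2)
      ≤ (1/c)*(∑ t ∈ Finset.Icc 2 T, ‖xstar (t-1) - xstar t‖^2) := by
    rw [show (1/c)*(∑ t ∈ Finset.Icc 2 T, ‖xstar (t-1) - xstar t‖^2)
        = (∑ t ∈ Finset.Icc 2 T, ‖xstar (t-1) - xstar t‖^2)/c from by ring,
      le_div_iff₀ hc]
    linarith only [hII]
  have hd2 : (1-2*c)*D^2 ≤ D^2 := by
    have h1 : (0:ℝ) ≤ 2*c*D^2 := by positivity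
    linarith only [h1]
  have hMain : 2*α*(∑ t ∈ Finset.Icc 1 T, (φ t (x (t+1)) - φ t (xstar t)))
      + ν*(∑ t ∈ Finset.Icc 1 T, ‖x (t+1) - x t‖^2)
      ≤ D^2 + (1/c)*(∑ t ∈ Finset.Icc 2 T, ‖xstar (t-1) - xstar t‖^2)
        + K2*E0^2
        + 6*K2*(∑ t ∈ Finset.Icc 2 T, ‖ystar (t-1) (xstar (t-1)) - ystar t (xstar t)‖^2) := by
    linarith only [hIs, hKe, hdiv, hd2]
  have hR0a : 2*α*(∑ t ∈ Finset.Icc 1 T, (φ t (x (t+1)) - φ t (xstar t)))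
      ≤ D^2 + (1/c)*(∑ t ∈ Finset.Icc 2 T, ‖xstar (t-1) - xstar t‖^2) + K2*E0^2
        + 6*K2*(∑ t ∈ Finset.Icc 2 T, ‖ystar (t-1) (xstar (t-1)) - ystar t (xstar t)‖^2) := by
    have h1 : 0 ≤ ν*(∑ t ∈ Finset.Icc 1 T, ‖x (t+1) - x t‖^2) := mul_nonneg hνpos.le hSDnn
    linarith only [hMain, h1]
  have hR0b : ν*(∑ t ∈ Finset.Icc 1 T, ‖x (t+1) - x t‖^2)
      ≤ D^2 + (1/c)*(∑ t ∈ Finset.Icc 2 T, ‖xstar (t-1) - xstar t‖^2) + K2*E0^2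
        + 6*K2*(∑ t ∈ Finset.Icc 2 T, ‖ystar (t-1) (xstar (t-1)) - ystar t (xstar t)‖^2) := by
    have h1 : 0 ≤ 2*α*(∑ t ∈ Finset.Icc 1 T, (φ t (x (t+1)) - φ t (xstar t))) :=
      mul_nonneg (by linarith only [hαpos]) hSR'nn
    linarith only [hMain, h1]
  have hfr1 : (3/2)*(∑ t ∈ Finset.Icc 1 T, (φ t (x (t+1)) - φ t (xstar t)))
      ≤ (3/(4*α))*(D^2 + (1/c)*(∑ t ∈ Finset.Icc 2 T, ‖xstar (t-1) - xstar t‖^2) + K2*E0^2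
        + 6*K2*(∑ t ∈ Finset.Icc 2 T, ‖ystar (t-1) (xstar (t-1)) - ystar t (xstar t)‖^2)) := by
    have he : (3/(4*α))*(2*α*(∑ t ∈ Finset.Icc 1 T, (φ t (x (t+1)) - φ t (xstar t))))
        = (3/2)*(∑ t ∈ Finset.Icc 1 T, (φ t (x (t+1)) - φ t (xstar t))) := by
      field_simp
      ring
    rw [← he]
    exact mul_le_mul_of_nonneg_left hR0a (by positivity)
  have hfr2 : (3*Lf)*(∑ t ∈ Finset.Icc 1 T, ‖x (t+1) - x t‖^2)
      ≤ (3*Lf/ν)*(D^2 + (1/c)*(∑ t ∈ Finset.Icc 2 T, ‖xstar (t-1) - xstar t‖^2) + K2*E0^2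
        + 6*K2*(∑ t ∈ Finset.Icc 2 T, ‖ystar (t-1) (xstar (t-1)) - ystar t (xstar t)‖^2)) := by
    have he : (3*Lf/ν)*(ν*(∑ t ∈ Finset.Icc 1 T, ‖x (t+1) - x t‖^2))
        = (3*Lf)*(∑ t ∈ Finset.Icc 1 T, ‖x (t+1) - x t‖^2) := by
      field_simp
    rw [← he]
    exact mul_le_mul_of_nonneg_left hR0b (div_nonneg (by positivity) hνpos.le)
  have hJR : (3/(4*α))*(D^2 + (1/c)*(∑ t ∈ Finset.Icc 2 T, ‖xstar (t-1) - xstar t‖^2) + K2*E0^2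
        + 6*K2*(∑ t ∈ Finset.Icc 2 T, ‖ystar (t-1) (xstar (t-1)) - ystar t (xstar t)‖^2))
      + (3*Lf/ν)*(D^2 + (1/c)*(∑ t ∈ Finset.Icc 2 T, ‖xstar (t-1) - xstar t‖^2) + K2*E0^2
        + 6*K2*(∑ t ∈ Finset.Icc 2 T, ‖ystar (t-1) (xstar (t-1)) - ystar t (xstar t)‖^2))
      = J*(D^2 + (1/c)*(∑ t ∈ Finset.Icc 2 T, ‖xstar (t-1) - xstar t‖^2) + K2*E0^2
        + 6*K2*(∑ t ∈ Finset.Icc 2 T, ‖ystar (t-1) (xstar (t-1)) - ystar t (xstar t)‖^2)) := by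
    rw [hJ]; ring
  -- coefficient facts
  have n1 : 0 ≤ J*D^2 := mul_nonneg hJpos.le (sq_nonneg D)
  have n2 : 0 ≤ J*(K2*E0^2) := mul_nonneg hJpos.le (mul_nonneg hK2nn (sq_nonneg E0))
  have n3 : 0 ≤ J*(6*K2) := mul_nonneg hJpos.le (by linarith only [hK2nn])
  have n4 : 0 ≤ s4L*D := mul_nonneg hs4Lnn hD.le
  have n5 : 0 ≤ J*(1/c) := mul_nonneg hJpos.le (by positivity)
  have hcoefP : J*(1/c) ≤ C := by
    rw [hC]; linarith only [n1, n2, n3, n4]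
  have hcoef1 : J*D^2 + J*(K2*E0^2) ≤ C := by
    rw [hC]; linarith only [n3, n4, n5]
  have hcoefW : J*(6*K2) ≤ C := by
    rw [hC]; linarith only [n1, n2, n4, n5]
  have hcoefΦ : s4L*D ≤ C := by
    rw [hC]; linarith only [n1, n2, n3, n5]
  have hPc := mul_le_mul_of_nonneg_right hcoefP hPnn
  have hWc := mul_le_mul_of_nonneg_right hcoefW hWnn
  have hΦc := mul_le_mul_of_nonneg_right hcoefΦ hΦnn
  linarith only [hVs, hfr1, hfr2, hJR, hcoef1, hPc, hWc, hΦc]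
end
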